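/- arXiv:1806.10828 — 10 statements merged into one kernel-verified Lean document; each statement's English description precedes it below -/
import Mathlib

section
/- If X is a connected subset of a continuum Y such that X is dense in Y and X is singular with respect to some point y ∈ Y, then X is indecomposable (i.e., X cannot be written as the union of two proper closed connected subsets). -/
/-- A dense connected subset of a continuum that is singular with respect to
some point is indecomposable. -/
theorem stmt_0 {Y : Type*} [TopologicalSpace Y] [CompactSpace Y] [ConnectedSpace Y]
    [TopologicalSpace.MetrizableSpace Y] [Nontrivial Y]
    (X : Set Y) (hXconn : IsConnected X) (hXdense : Dense X)
    (y : Y)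
    (hsing : ∀ C : Set Y, C ⊆ X → IsConnected C → y ∈ closure C → X ⊆ closure C) :
    ¬ ∃ H K : Set Y, H ⊆ X ∧ K ⊆ X ∧ H ≠ X ∧ K ≠ X ∧
      closure H ∩ X = H ∧ closure K ∩ X = K ∧
      IsConnected H ∧ IsConnected K ∧ H ∪ K = X := by
  rintro ⟨H, K, hHX, hKX, hHne, hKne, hHcl, hKcl, hHconn, hKconn, hHK⟩
  have hy : y ∈ closure X := hXdense y
  rw [← hHK, closure_union] at hy
  rcases hy with hy | hy
  · have h := hsing H hHX hHconn hy
    apply hHne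
    rw [← hHcl]
    exact Set.ext fun x => ⟨fun hx => hx.2, fun hx => ⟨h hx, hx⟩⟩
  · have h := hsing K hKX hKconn hy
    apply hKne
    rw [← hKcl]
    exact Set.ext fun x => ⟨fun hx => hx.2, fun hx => ⟨h hx, hx⟩⟩
end

section
/- A connected topological space X is indecomposable if and only if X is the only closed connected subset of X with nonempty interior. -/
open Set

/-- Gluing lemma: if `A` is closed preconnected, `F₁ F₂` are disjoint closed sets
covering the rest of a connected space, then `A ∪ F₁` is preconnected. -/
lemma aux_glue {X : Type*} [TopologicalSpace X] [ConnectedSpace X]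
    {A F₁ F₂ : Set X} (hAc : IsClosed A) (hA : IsPreconnected A)
    (h1 : IsClosed F₁) (h2 : IsClosed F₂) (hd : Disjoint F₁ F₂)
    (hu : A ∪ F₁ ∪ F₂ = Set.univ) : IsPreconnected (A ∪ F₁) := by
  intro U V hU hV hsub hxU hxV
  by_contra hne
  rw [Set.not_nonempty_iff_eq_empty] at hne
  have key : ∀ U V : Set X, IsOpen U → IsOpen V → (A ∪ F₁) ⊆ U ∪ V →
      ((A ∪ F₁) ∩ (U ∩ V)) = ∅ → A ⊆ U →
      ((A ∪ F₁) ∩ U).Nonempty → ((A ∪ F₁) ∩ V).Nonempty → False := by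
    rintro U V hU hV hsub hne hAU ⟨x, hx⟩ ⟨y, hy⟩
    set B : Set X := (A ∪ F₁) \ U with hB
    have hBV : B = (A ∪ F₁) ∩ V := by
      apply Set.Subset.antisymm
      · rintro z ⟨hz1, hz2⟩
        exact ⟨hz1, (hsub hz1).resolve_left hz2⟩
      · rintro z ⟨hz1, hz2⟩
        refine ⟨hz1, fun hzU => ?_⟩
        have : z ∈ (A ∪ F₁) ∩ (U ∩ V) := ⟨hz1, hzU, hz2⟩
        simp [hne] at this
    have hBclosed : IsClosed B := (hAc.union h1).sdiff hU
    have hBopen : IsOpen B := by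
      have : B = V \ F₂ := by
        apply Set.Subset.antisymm
        · intro z hz
          rw [hBV] at hz
          refine ⟨hz.2, fun hzF2 => ?_⟩
          rcases hz.1 with hzA | hzF1
          · have hzU : z ∈ U := hAU hzA
            have : z ∈ (A ∪ F₁) ∩ (U ∩ V) := ⟨Or.inl hzA, hzU, hz.2⟩
            simp [hne] at this
          · exact hd.ne_of_mem hzF1 hzF2 rfl
        · rintro z ⟨hzV, hzF2⟩
          have hzAF : z ∈ A ∪ F₁ := by
            have : z ∈ A ∪ F₁ ∪ F₂ := hu ▸ Set.mem_univ z
            rcases this with h | h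
            · exact h
            · exact absurd h hzF2
          rw [hBV]; exact ⟨hzAF, hzV⟩
      rw [this]
      exact hV.sdiff h2
    have hclopen : IsClopen B := ⟨hBclosed, hBopen⟩
    rcases isClopen_iff.mp hclopen with hBe | hBu
    · have hyB : y ∈ B := by rw [hBV]; exact hy
      rw [hBe] at hyB
      exact hyB
    · have hxB : x ∈ B := hBu ▸ Set.mem_univ x
      exact hxB.2 hx.2
  -- A ⊆ U or A ⊆ V
  have hAsub : A ⊆ U ∪ V := fun z hz => hsub (Or.inl hz)
  by_cases hAV : (A ∩ V).Nonempty
  · by_cases hAU : (A ∩ U).Nonempty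
    · obtain ⟨z, hz⟩ := hA U V hU hV hAsub hAU hAV
      have : z ∈ (A ∪ F₁) ∩ (U ∩ V) := ⟨Or.inl hz.1, hz.2⟩
      simp [hne] at this
    · -- A ⊆ V
      have hAsubV : A ⊆ V := by
        intro z hz
        rcases hAsub hz with h | h
        · exact ((hAU ⟨z, hz, h⟩)).elim
        · exact h
      exact key V U hV hU (fun z hz => (hsub hz).symm)
        (by rw [Set.inter_comm V U]; exact hne) hAsubV hxV hxU
  · -- A ⊆ U
    have hAsubU : A ⊆ U := by
      intro z hz
      rcases hAsub hz with h | h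
      · exact h
      · exact ((hAV ⟨z, hz, h⟩)).elim
    exact key U V hU hV hsub hne hAsubU hxU hxV

/-- A connected space is indecomposable iff it is the only closed connected
subset of itself with nonempty interior. -/
theorem stmt_1 {X : Type*} [TopologicalSpace X] [ConnectedSpace X] :
    (¬ ∃ H K : Set X, IsClosed H ∧ IsClosed K ∧ IsConnected H ∧ IsConnected K ∧
        H ≠ Set.univ ∧ K ≠ Set.univ ∧ H ∪ K = Set.univ) ↔
    (∀ A : Set X, IsClosed A → IsConnected A → (interior A).Nonempty → A = Set.univ) := by
  constructor
  · -- indecomposable → only A with nonempty interior is univ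
    intro h A hAc hAconn hAint
    by_contra hA
    set K : Set X := (interior A)ᶜ with hK
    have hKc : IsClosed K := isOpen_interior.isClosed_compl
    have hcomplA : Aᶜ ⊆ K := Set.compl_subset_compl.mpr interior_subset
    have hAcne : Aᶜ.Nonempty := Set.nonempty_compl.mpr hA
    have hKne : K.Nonempty := hAcne.mono hcomplA
    have hKne' : K ≠ Set.univ := by
      intro hKu
      have : interior A = ∅ := by
        rw [← Set.compl_univ, ← hKu, hK, compl_compl]
      rw [this] at hAint
      exact Set.not_nonempty_empty hAint
    have hUnion : A ∪ K = Set.univ := by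
      apply Set.eq_univ_of_subset (Set.union_subset_union_left K interior_subset)
      rw [hK, Set.union_compl_self]
    have hclK : closure Aᶜ = K := by rw [closure_compl]
    by_cases hKp : IsPreconnected K
    · exact h ⟨A, K, hAc, hKc, hAconn, ⟨hKne, hKp⟩, hA, hKne', hUnion⟩
    · rw [IsPreconnected] at hKp
      push_neg at hKp
      obtain ⟨U, V, hU, hV, hsub, hKU, hKV, hKUV⟩ := hKp
      set F₁ : Set X := K \ V with hF1
      set F₂ : Set X := K \ U with hF2
      have h1 : IsClosed F₁ := hKc.sdiff hV
      have h2 : IsClosed F₂ := hKc.sdiff hU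
      have hd : Disjoint F₁ F₂ := by
        rw [Set.disjoint_left]
        rintro z ⟨hzK, hzV⟩ ⟨_, hzU⟩
        rcases hsub hzK with h | h
        exacts [hzU h, hzV h]
      have hF1F2 : F₁ ∪ F₂ = K := by
        apply Set.Subset.antisymm
        · rintro z (⟨hz, _⟩ | ⟨hz, _⟩) <;> exact hz
        · intro z hz
          by_cases hzV : z ∈ V
          · refine Or.inr ⟨hz, fun hzU => ?_⟩
            have : z ∈ K ∩ (U ∩ V) := ⟨hz, hzU, hzV⟩
            simp [hKUV] at this
          · exact Or.inl ⟨hz, hzV⟩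
      have hF1ne : F₁.Nonempty := by
        obtain ⟨z, hzK, hzU⟩ := hKU
        refine ⟨z, hzK, fun hzV => ?_⟩
        have : z ∈ K ∩ (U ∩ V) := ⟨hzK, hzU, hzV⟩
        simp [hKUV] at this
      have hF2ne : F₂.Nonempty := by
        obtain ⟨z, hzK, hzV⟩ := hKV
        refine ⟨z, hzK, fun hzU => ?_⟩
        have : z ∈ K ∩ (U ∩ V) := ⟨hzK, hzU, hzV⟩
        simp [hKUV] at this
      have hcover : A ∪ F₁ ∪ F₂ = Set.univ := by
        rw [Set.union_assoc, hF1F2, hUnion]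
      -- F₁ \ A and F₂ \ A nonempty
      have hprop : ∀ (G₁ G₂ : Set X), IsClosed G₁ → G₁ ∪ G₂ = K → Disjoint G₁ G₂ →
          G₂.Nonempty → (G₂ \ A).Nonempty := by
        intro G₁ G₂ hG1 hG hdG hG2ne
        by_contra hempty
        rw [Set.not_nonempty_iff_eq_empty, Set.diff_eq_empty] at hempty
        have hAcG1 : Aᶜ ⊆ G₁ := by
          intro z hz
          rcases (hG ▸ hcomplA hz : z ∈ G₁ ∪ G₂) with h | h
          · exact h
          · exact absurd (hempty h) hz
        have hKG1 : K ⊆ G₁ := by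
          rw [← hclK]
          exact closure_minimal hAcG1 hG1
        obtain ⟨z, hz⟩ := hG2ne
        exact hdG.ne_of_mem (hKG1 (hG ▸ Or.inr hz)) hz rfl
      have hF2A : (F₂ \ A).Nonempty := hprop F₁ F₂ h1 hF1F2 hd hF2ne
      have hF1A : (F₁ \ A).Nonempty := hprop F₂ F₁ h2 (by rw [Set.union_comm]; exact hF1F2) hd.symm hF1ne
      -- build the decomposition
      refine h ⟨A ∪ F₁, A ∪ F₂, hAc.union h1, hAc.union h2, ?_, ?_, ?_, ?_, ?_⟩
      · exact ⟨hAconn.nonempty.mono Set.subset_union_left,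
          aux_glue hAc hAconn.isPreconnected h1 h2 hd hcover⟩
      · refine ⟨hAconn.nonempty.mono Set.subset_union_left,
          aux_glue hAc hAconn.isPreconnected h2 h1 hd.symm ?_⟩
        rw [Set.union_assoc, Set.union_comm F₂ F₁, ← Set.union_assoc, hcover]
      · intro hu
        obtain ⟨z, hzF2, hzA⟩ := hF2A
        have : z ∈ A ∪ F₁ := hu ▸ Set.mem_univ z
        rcases this with h | h
        · exact hzA h
        · exact hd.ne_of_mem h hzF2 rfl
      · intro hu
        obtain ⟨z, hzF1, hzA⟩ := hF1A
        have : z ∈ A ∪ F₂ := hu ▸ Set.mem_univ z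
        rcases this with h | h
        · exact hzA h
        · exact hd.ne_of_mem hzF1 h rfl
      · rw [Set.union_assoc, Set.union_comm F₁ (A ∪ F₂), Set.union_assoc,
          Set.union_comm F₂ F₁, ← Set.union_assoc, ← Set.union_assoc,
          Set.union_self, hcover]
  · -- only-univ → indecomposable
    rintro h ⟨H, K, hHc, hKc, hHconn, hKconn, hH, hK, hu⟩
    apply hH
    apply h H hHc hHconn
    have hKcompl : Kᶜ ⊆ H := by
      intro z hz
      rcases (hu ▸ Set.mem_univ z : z ∈ H ∪ K) with h | h
      · exact h
      · exact absurd h hz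
    have : Kᶜ ⊆ interior H := interior_maximal hKcompl hKc.isOpen_compl
    exact (Set.nonempty_compl.mpr hK).mono this
end

section
/- Every strongly indecomposable connected topological space with more than one point is indecomposable. -/
/-- Every strongly indecomposable connected space with more than one point
is indecomposable. -/
theorem stmt_2 {X : Type*} [TopologicalSpace X] [ConnectedSpace X] [Nontrivial X]
    (hstrong : ∀ U V : Set X, IsOpen U → IsOpen V → U.Nonempty → V.Nonempty →
      Disjoint U V →
      ∃ A B : Set X, IsClosed A ∧ IsClosed B ∧ Disjoint A B ∧ Uᶜ = A ∪ B ∧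
        (A ∩ V).Nonempty ∧ (B ∩ V).Nonempty) :
    ¬ ∃ H K : Set X, IsClosed H ∧ IsClosed K ∧ IsConnected H ∧ IsConnected K ∧
      H ≠ Set.univ ∧ K ≠ Set.univ ∧ H ∪ K = Set.univ := by
  rintro ⟨H, K, hHc, hKc, hHconn, hKconn, hHne, hKne, hunion⟩
  have hUopen : IsOpen Kᶜ := hKc.isOpen_compl
  have hVopen : IsOpen Hᶜ := hHc.isOpen_compl
  have hUne : Kᶜ.Nonempty := Set.nonempty_compl.mpr hKne
  have hVne : Hᶜ.Nonempty := Set.nonempty_compl.mpr hHne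
  have hVK : Hᶜ ⊆ K := by
    intro x hx
    have hx' : x ∈ H ∪ K := hunion ▸ Set.mem_univ x
    rcases hx' with h | h
    · exact absurd h hx
    · exact h
  have hdisj : Disjoint Kᶜ Hᶜ := by
    refine Set.disjoint_left.mpr fun x hxK hxH => hxK (hVK hxH)
  obtain ⟨A, B, hAc, hBc, hAB, hcover, hAV, hBV⟩ :=
    hstrong Kᶜ Hᶜ hUopen hVopen hUne hVne hdisj
  rw [compl_compl] at hcover
  have hKA : (K ∩ A).Nonempty := by
    obtain ⟨x, hxA, hxV⟩ := hAV
    exact ⟨x, hVK hxV, hxA⟩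
  have hKB : (K ∩ B).Nonempty := by
    obtain ⟨x, hxB, hxV⟩ := hBV
    exact ⟨x, hVK hxV, hxB⟩
  have hsub : K ⊆ A ∪ B := hcover.le
  have := (isPreconnected_closed_iff.mp hKconn.isPreconnected) A B hAc hBc
    hsub hKA hKB
  obtain ⟨x, _, hxA, hxB⟩ := this
  exact hAB.ne_of_mem hxA hxB rfl
end

section
/- Let X be a meager composant of a continuum Y. If X is indecomposable (as a connected subspace), then every proper closed connected subset of X is compact. -/
/-- Union of two closed sets with empty interior has empty interior. -/
lemma aux_nwd_union {Y : Type*} [TopologicalSpace Y] {s t : Set Y}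
    (hs : IsClosed s) (ht : IsClosed t)
    (hsi : interior s = ∅) (hti : interior t = ∅) : interior (s ∪ t) = ∅ := by
  by_contra h
  have hU : (interior (s ∪ t)).Nonempty := Set.nonempty_iff_ne_empty.2 h
  have h1 : interior (s ∪ t) \ s ⊆ interior t := by
    apply interior_maximal
    · intro z hz
      rcases interior_subset hz.1 with h | h
      · exact absurd h hz.2
      · exact h
    · exact isOpen_interior.sdiff hs
  have h2 : interior (s ∪ t) \ s = ∅ := by
    rw [hti] at h1; exact Set.subset_empty_iff.1 h1
  have h3 : interior (s ∪ t) ⊆ s := by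
    intro z hz
    by_contra hzs
    have hmem : z ∈ interior (s ∪ t) \ s := ⟨hz, hzs⟩
    rw [h2] at hmem
    exact hmem
  have h4 : interior (s ∪ t) ⊆ interior s := interior_maximal h3 isOpen_interior
  rw [hsi] at h4
  exact hU.ne_empty (Set.subset_empty_iff.1 h4)

/-- Key connectedness lemma for the decomposition pieces. -/
lemma aux_conn {Y : Type*} [TopologicalSpace Y] {X C A B U : Set Y}
    (hXp : IsPreconnected X) (hC : IsConnected C) (hUo : IsOpen U)
    (hAU : A ⊆ U) (hBU : B ∩ U = ∅)
    (hcover : C ∪ A ∪ B = X)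
    (hclA : closure A ∩ X ⊆ A) :
    IsConnected (C ∪ A) := by
  have hCX : C ⊆ X := by rw [← hcover]; intro z hz; exact Or.inl (Or.inl hz)
  have hAX : A ⊆ X := by rw [← hcover]; intro z hz; exact Or.inl (Or.inr hz)
  refine ⟨hC.nonempty.mono Set.subset_union_left, ?_⟩
  -- symmetric helper
  have key : ∀ u v : Set Y, IsOpen u → IsOpen v → C ∪ A ⊆ u ∪ v →
      ((C ∪ A) ∩ v).Nonempty → C ∩ v = ∅ → (C ∪ A) ∩ (u ∩ v) = ∅ → False := by
    intro u v hu hv hsub hnev hCv hcon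
    set Q' : Set Y := A ∩ v with hQ'
    have hQ'ne : Q'.Nonempty := by
      obtain ⟨w, hw, hwv⟩ := hnev
      rcases hw with hw | hw
      · exact absurd (Set.mem_empty_iff_false w).mp (fun _ => (hCv ▸ ⟨hw, hwv⟩ : w ∈ (∅ : Set Y)))
      · exact ⟨w, hw, hwv⟩
    have hCQ' : C ⊆ X \ Q' := fun z hz => ⟨hCX hz, fun hzq =>
      (Set.eq_empty_iff_forall_notMem.1 hCv z) ⟨hz, hzq.2⟩⟩
    have := isPreconnected_closed_iff.1 hXp (closure Q') (closure (X \ Q'))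
      isClosed_closure isClosed_closure
      (by intro z hz
          by_cases hzq : z ∈ Q'
          · exact Or.inl (subset_closure hzq)
          · exact Or.inr (subset_closure ⟨hz, hzq⟩))
      ⟨hQ'ne.choose, hAX hQ'ne.choose_spec.1, subset_closure hQ'ne.choose_spec⟩
      ⟨hC.nonempty.choose, hCX hC.nonempty.choose_spec, subset_closure (hCQ' hC.nonempty.choose_spec)⟩
    obtain ⟨z, hzX, hz1, hz2⟩ := this
    have hzA : z ∈ A := hclA ⟨closure_mono (Set.inter_subset_left) hz1, hzX⟩
    have hzuv : z ∈ u ∪ v := hsub (Or.inr hzA)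
    have hzv : z ∈ v := by
      rcases hzuv with hzu | hzv
      · obtain ⟨w, hwu, hwA, hwv⟩ := mem_closure_iff.1 hz1 u hu hzu
        exact absurd (Set.eq_empty_iff_forall_notMem.1 hcon w)
          (fun h => h ⟨Or.inr hwA, hwu, hwv⟩)
      · exact hzv
    -- z ∈ A ⊆ U, z ∈ v; use nbhd U ∩ v against closure (X \ Q')
    obtain ⟨w, hw, hwX, hwQ'⟩ := mem_closure_iff.1 hz2 (U ∩ v) (hUo.inter hv) ⟨hAU hzA, hzv⟩
    have : w ∈ C ∪ A ∪ B := hcover ▸ hwX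
    rcases this with (hwC | hwA) | hwB
    · exact (Set.eq_empty_iff_forall_notMem.1 hCv w) ⟨hwC, hw.2⟩
    · exact hwQ' ⟨hwA, hw.2⟩
    · exact (Set.eq_empty_iff_forall_notMem.1 hBU w) ⟨hwB, hw.1⟩
  intro u v hu hv hsub hne1 hne2
  by_contra hcon
  rw [Set.not_nonempty_iff_eq_empty] at hcon
  have hnot : ¬ ((C ∩ u).Nonempty ∧ (C ∩ v).Nonempty) := by
    rintro ⟨h1, h2⟩
    obtain ⟨z, hz⟩ := hC.isPreconnected u v hu hv
      (Set.Subset.trans Set.subset_union_left hsub) h1 h2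
    exact (Set.eq_empty_iff_forall_notMem.1 hcon z) ⟨Or.inl hz.1, hz.2⟩
  rcases not_and_or.1 hnot with h | h
  · rw [Set.not_nonempty_iff_eq_empty] at h
    exact key v u hv hu (by rw [Set.union_comm v u]; exact hsub) hne1 h
      (by rwa [Set.inter_comm u v] at hcon)
  · rw [Set.not_nonempty_iff_eq_empty] at h
    exact key u v hu hv hsub hne2 h hcon

/-- In an indecomposable meager composant, every proper closed connected
subset is compact. -/
theorem stmt_4 {Y : Type*} [TopologicalSpace Y] [CompactSpace Y] [ConnectedSpace Y]
    [TopologicalSpace.MetrizableSpace Y] [Nontrivial Y]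
    (x : Y) (X : Set Y)
    (hX : X = ⋃₀ {K : Set Y | IsCompact K ∧ IsConnected K ∧ IsNowhereDense K ∧ x ∈ K})
    (hind : ¬ ∃ H K : Set Y, H ⊆ X ∧ K ⊆ X ∧ H ≠ X ∧ K ≠ X ∧
      closure H ∩ X = H ∧ closure K ∩ X = K ∧
      IsConnected H ∧ IsConnected K ∧ H ∪ K = X) :
    ∀ C : Set Y, C ⊆ X → IsConnected C → closure C ∩ X = C → C ≠ X → IsCompact C := by
  intro C hCX hCc hCcl hCne
  by_cases hnwd : IsNowhereDense (closure C)
  · -- nowhere dense case: closure C ⊆ X, so C is closed hence compact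
    obtain ⟨c, hc⟩ := hCc.nonempty
    have hcX : c ∈ X := hCX hc
    rw [hX] at hcX
    obtain ⟨K₀, ⟨hK₀c, hK₀conn, hK₀nwd, hxK₀⟩, hcK₀⟩ := hcX
    have hK₀cl : IsClosed K₀ := hK₀c.isClosed
    have hDcl : IsClosed (closure C) := isClosed_closure
    have hDc : IsCompact (closure C) := hDcl.isCompact
    have hmem : K₀ ∪ closure C ∈
        {K : Set Y | IsCompact K ∧ IsConnected K ∧ IsNowhereDense K ∧ x ∈ K} := by
      refine ⟨hK₀c.union hDc, IsConnected.union ⟨c, hcK₀, subset_closure hc⟩ hK₀conn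
        hCc.closure, ?_, Or.inl hxK₀⟩
      have hclu : closure (K₀ ∪ closure C) = K₀ ∪ closure C :=
        (hK₀cl.union hDcl).closure_eq
      rw [IsNowhereDense, hclu]
      refine aux_nwd_union hK₀cl hDcl ?_ ?_
      · have := hK₀nwd
        rwa [IsNowhereDense, hK₀cl.closure_eq] at this
      · have := hnwd
        rwa [IsNowhereDense, closure_closure] at this
    have hDX : closure C ⊆ X := by
      rw [hX]
      exact (Set.subset_union_right).trans (Set.subset_sUnion_of_mem hmem)
    have hCeq : C = closure C := by
      conv_lhs => rw [← hCcl]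
      exact Set.inter_eq_left.2 hDX
    rw [hCeq]
    exact hDc
  · -- somewhere dense case: contradiction with indecomposability
    exfalso
    apply hind
    have hXpre : IsPreconnected X := by
      rw [hX]
      exact isPreconnected_sUnion x _ (fun s hs => hs.2.2.2)
        (fun s hs => hs.2.1.isPreconnected)
    rw [IsNowhereDense, closure_closure] at hnwd
    have hU₀ : (interior (closure C)).Nonempty := Set.nonempty_iff_ne_empty.2 hnwd
    obtain ⟨y₀, hy₀⟩ := hU₀
    have hy₀X : y₀ ∈ closure X := closure_mono hCX (interior_subset hy₀)
    obtain ⟨u, huI, huX⟩ :=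
      mem_closure_iff.1 hy₀X (interior (closure C)) isOpen_interior hy₀
    have hInotXC : ∀ z, z ∈ interior (closure C) → z ∈ X → z ∈ C := fun z hzI hzX =>
      hCcl ▸ ⟨interior_subset hzI, hzX⟩
    have hunotW : u ∉ closure (X \ C) := by
      intro h
      obtain ⟨w, hwI, hwX, hwC⟩ :=
        mem_closure_iff.1 h (interior (closure C)) isOpen_interior huI
      exact hwC (hInotXC w hwI hwX)
    set W : Set Y := closure (X \ C) ∩ X with hWdef
    have hWX : W ⊆ X := Set.inter_subset_right
    have hWcl : closure W ∩ X = W := by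
      apply Set.Subset.antisymm
      · intro z hz
        exact ⟨(closure_mono Set.inter_subset_left).trans
          (closure_closure (s := X \ C)).subset hz.1, hz.2⟩
      · exact fun z hz => ⟨subset_closure hz, hz.2⟩
    have hXCW : X \ C ⊆ W := fun z hz => ⟨subset_closure hz, hz.1⟩
    have hcoverW : C ∪ W = X := by
      apply Set.Subset.antisymm
      · exact Set.union_subset hCX hWX
      · intro z hz
        by_cases hzC : z ∈ C
        · exact Or.inl hzC
        · exact Or.inr (hXCW ⟨hz, hzC⟩)
    obtain ⟨p, hpX, hpC⟩ := Set.exists_of_ssubset (ssubset_of_subset_of_ne hCX hCne)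
    have hWne : W.Nonempty := ⟨p, hXCW ⟨hpX, hpC⟩⟩
    have hWneX : W ≠ X := fun h => hunotW (h ▸ huX : u ∈ W).1
    by_cases hWp : IsPreconnected W
    · exact ⟨C, W, hCX, hWX, hCne, hWneX, hCcl, hWcl, hCc, ⟨hWne, hWp⟩, hcoverW⟩
    · rw [IsPreconnected] at hWp
      push_neg at hWp
      obtain ⟨U, V, hUo, hVo, hWuv, hWU, hWV, hWUV⟩ := hWp
      set A : Set Y := W ∩ U with hAdef
      set B : Set Y := W ∩ V with hBdef
      have hAU : A ⊆ U := Set.inter_subset_right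
      have hBV : B ⊆ V := Set.inter_subset_right
      have hAV : A ∩ V = ∅ := by
        rw [Set.eq_empty_iff_forall_notMem]
        rintro z ⟨⟨hzW, hzU⟩, hzV⟩
        exact (Set.eq_empty_iff_forall_notMem.1 hWUV z) ⟨hzW, hzU, hzV⟩
      have hBU : B ∩ U = ∅ := by
        rw [Set.eq_empty_iff_forall_notMem]
        rintro z ⟨⟨hzW, hzV⟩, hzU⟩
        exact (Set.eq_empty_iff_forall_notMem.1 hWUV z) ⟨hzW, hzU, hzV⟩
      have hWAB : A ∪ B = W := by
        rw [hAdef, hBdef, ← Set.inter_union_distrib_left]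
        exact Set.inter_eq_left.2 hWuv
      have hcover : C ∪ A ∪ B = X := by
        rw [Set.union_assoc, hWAB, hcoverW]
      have hcover' : C ∪ B ∪ A = X := by
        rw [Set.union_assoc, Set.union_comm B A, ← Set.union_assoc, hcover]
      have hclA : closure A ∩ X ⊆ A := by
        intro z hz
        have hzW : z ∈ W := by
          refine ⟨?_, hz.2⟩
          exact ((closure_mono (hWAB ▸ Set.subset_union_left : A ⊆ W)).trans
            ((closure_mono Set.inter_subset_left).trans
              (closure_closure (s := X \ C)).subset)) hz.1
        by_cases hzU : z ∈ U
        · exact ⟨hzW, hzU⟩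
        · have hzV : z ∈ V := (hWuv hzW).resolve_left hzU
          obtain ⟨w, hwV, hwA⟩ := mem_closure_iff.1 hz.1 V hVo hzV
          exact absurd ⟨hwA, hwV⟩ (Set.eq_empty_iff_forall_notMem.1 hAV w)
      have hclB : closure B ∩ X ⊆ B := by
        intro z hz
        have hzW : z ∈ W := by
          refine ⟨?_, hz.2⟩
          exact ((closure_mono (hWAB ▸ Set.subset_union_right : B ⊆ W)).trans
            ((closure_mono Set.inter_subset_left).trans
              (closure_closure (s := X \ C)).subset)) hz.1
        by_cases hzV : z ∈ V
        · exact ⟨hzW, hzV⟩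
        · have hzU : z ∈ U := (hWuv hzW).resolve_right hzV
          obtain ⟨w, hwU, hwB⟩ := mem_closure_iff.1 hz.1 U hUo hzU
          exact absurd ⟨hwB, hwU⟩ (Set.eq_empty_iff_forall_notMem.1 hBU w)
      -- witnesses for properness
      obtain ⟨b, hbW, hbV⟩ := hWV
      obtain ⟨q, hqV, hqX, hqC⟩ := mem_closure_iff.1 hbW.1 V hVo hbV
      have hqB : q ∈ B := ⟨hXCW ⟨hqX, hqC⟩, hqV⟩
      have hqA : q ∉ A := fun h =>
        (Set.eq_empty_iff_forall_notMem.1 hAV q) ⟨h, hqV⟩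
      obtain ⟨a, haW, haU⟩ := hWU
      obtain ⟨q', hq'U, hq'X, hq'C⟩ := mem_closure_iff.1 haW.1 U hUo haU
      have hq'A : q' ∈ A := ⟨hXCW ⟨hq'X, hq'C⟩, hq'U⟩
      have hq'B : q' ∉ B := fun h =>
        (Set.eq_empty_iff_forall_notMem.1 hBU q') ⟨h, hq'U⟩
      refine ⟨C ∪ A, C ∪ B, ?_, ?_, ?_, ?_, ?_, ?_, ?_, ?_, ?_⟩
      · rw [← hcover]; exact Set.subset_union_left
      · rw [← hcover']; exact Set.subset_union_left
      · intro h
        have : q ∈ C ∪ A := h ▸ hqX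
        rcases this with h' | h'
        · exact hqC h'
        · exact hqA h'
      · intro h
        have : q' ∈ C ∪ B := h ▸ hq'X
        rcases this with h' | h'
        · exact hq'C h'
        · exact hq'B h'
      · rw [closure_union, Set.union_inter_distrib_right, hCcl]
        apply Set.Subset.antisymm
        · exact Set.union_subset_union_right C hclA
        · exact Set.union_subset_union_right C (fun z hz => ⟨subset_closure hz,
            (hcover ▸ (Set.subset_union_right.trans Set.subset_union_left :
              A ⊆ C ∪ A ∪ B) : A ⊆ X) hz⟩)
      · rw [closure_union, Set.union_inter_distrib_right, hCcl]
        apply Set.Subset.antisymm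
        · exact Set.union_subset_union_right C hclB
        · exact Set.union_subset_union_right C (fun z hz => ⟨subset_closure hz,
            (hcover' ▸ (Set.subset_union_right.trans Set.subset_union_left :
              B ⊆ C ∪ B ∪ A) : B ⊆ X) hz⟩)
      · exact aux_conn hXpre hCc hUo hAU hBU hcover hclA
      · exact aux_conn hXpre hCc hVo hBV hAV hcover' hclB
      · rw [Set.union_union_union_comm, Set.union_self, ← Set.union_assoc, hcover]
end

section
/- Let X be a meager composant of a continuum Y. If X is indecomposable and not compact, then X is of the first category in itself (X is a countable union of sets that are nowhere dense in X). -/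
open Set

section Aux

variable {Y : Type*} [TopologicalSpace Y]

/-- Auxiliary: a clopen-type contradiction for the connectedness of `A ∪ (X \ A ∩ u)`. -/
lemma meager_conn_piece_aux {X A u v o₁ o₂ : Set Y} (hXc : IsPreconnected X)
    (hAne : A.Nonempty) (hAX : A ⊆ X) (hAcl : closure A ∩ X = A)
    (hu : IsOpen u) (hv : IsOpen v) (hcov : X \ A ⊆ u ∪ v)
    (hdisj : X \ A ∩ (u ∩ v) = ∅)
    (ho₁ : IsOpen o₁) (ho₂ : IsOpen o₂)
    (hco : A ∪ (X \ A ∩ u) ⊆ o₁ ∪ o₂)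
    (hAo₁ : A ⊆ o₁)
    (hP₂ : ((X \ A ∩ u) ∩ o₂).Nonempty)
    (hempty : (A ∪ (X \ A ∩ u)) ∩ (o₁ ∩ o₂) = ∅) : False := by
  have hSc : X \ A ⊆ (closure A)ᶜ := by
    intro y hy hyc
    have h' : y ∈ closure A ∩ X := ⟨hyc, hy.1⟩
    rw [hAcl] at h'
    exact hy.2 h'
  have key := hXc ((closure A)ᶜ ∩ (u ∩ o₂)) (o₁ ∪ ((closure A)ᶜ ∩ v))
    (((isClosed_closure.isOpen_compl).inter (hu.inter ho₂)))
    (ho₁.union ((isClosed_closure.isOpen_compl).inter hv))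
    (by
      intro y hy
      by_cases hyA : y ∈ A
      · exact Or.inr (Or.inl (hAo₁ hyA))
      · have hyS : y ∈ X \ A := ⟨hy, hyA⟩
        have hyc : y ∈ (closure A)ᶜ := hSc hyS
        rcases hcov hyS with hyu | hyv
        · rcases hco (Or.inr ⟨hyS, hyu⟩) with h1 | h2
          · exact Or.inr (Or.inl h1)
          · exact Or.inl ⟨hyc, hyu, h2⟩
        · exact Or.inr (Or.inr ⟨hyc, hyv⟩))
    (by
      obtain ⟨p, hpP, hpo₂⟩ := hP₂
      exact ⟨p, hpP.1.1, hSc hpP.1, hpP.2, hpo₂⟩)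
    (by
      obtain ⟨a, ha⟩ := hAne
      exact ⟨a, hAX ha, Or.inl (hAo₁ ha)⟩)
  obtain ⟨z, hzX, ⟨hzc, hzu, hzo₂⟩, hzv'⟩ := key
  have hzA : z ∉ A := fun h => hzc (subset_closure h)
  have hzP : z ∈ X \ A ∩ u := ⟨⟨hzX, hzA⟩, hzu⟩
  rcases hzv' with hzo₁ | ⟨_, hzv⟩
  · exact (eq_empty_iff_forall_notMem.mp hempty z) ⟨Or.inr hzP, hzo₁, hzo₂⟩
  · exact (eq_empty_iff_forall_notMem.mp hdisj z) ⟨⟨hzX, hzA⟩, hzu, hzv⟩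

/-- If `u, v` separate `X \ A`, then `A ∪ (X \ A ∩ u)` is preconnected. -/
lemma meager_conn_piece {X A u v : Set Y} (hXc : IsPreconnected X)
    (hA : IsConnected A) (hAX : A ⊆ X) (hAcl : closure A ∩ X = A)
    (hu : IsOpen u) (hv : IsOpen v) (hcov : X \ A ⊆ u ∪ v)
    (hdisj : X \ A ∩ (u ∩ v) = ∅) :
    IsPreconnected (A ∪ (X \ A ∩ u)) := by
  intro o₁ o₂ ho₁ ho₂ hco hne₁ hne₂
  by_contra hcon
  have hempty : (A ∪ (X \ A ∩ u)) ∩ (o₁ ∩ o₂) = ∅ :=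
    not_nonempty_iff_eq_empty.mp hcon
  have hAsub : A ⊆ o₁ ∪ o₂ := (subset_union_left).trans hco
  by_cases hA₁ : (A ∩ o₁).Nonempty
  · by_cases hA₂ : (A ∩ o₂).Nonempty
    · obtain ⟨z, hz⟩ := hA.2 o₁ o₂ ho₁ ho₂ hAsub hA₁ hA₂
      exact (eq_empty_iff_forall_notMem.mp hempty z) ⟨Or.inl hz.1, hz.2⟩
    · have hAo₁ : A ⊆ o₁ := by
        intro a ha
        rcases hAsub ha with h | h
        · exact h
        · exact absurd ⟨a, ha, h⟩ hA₂
      have hP₂ : ((X \ A ∩ u) ∩ o₂).Nonempty := by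
        obtain ⟨z, hz, hzo₂⟩ := hne₂
        rcases hz with hzA | hzP
        · exact absurd ⟨z, hzA, hzo₂⟩ hA₂
        · exact ⟨z, hzP, hzo₂⟩
      exact meager_conn_piece_aux hXc hA.1 hAX hAcl hu hv hcov hdisj ho₁ ho₂ hco
        hAo₁ hP₂ hempty
  · have hAo₂ : A ⊆ o₂ := by
      intro a ha
      rcases hAsub ha with h | h
      · exact absurd ⟨a, ha, h⟩ hA₁
      · exact h
    have hP₁ : ((X \ A ∩ u) ∩ o₁).Nonempty := by
      obtain ⟨z, hz, hzo₁⟩ := hne₁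
      rcases hz with hzA | hzP
      · exact absurd ⟨z, hzA, hzo₁⟩ hA₁
      · exact ⟨z, hzP, hzo₁⟩
    exact meager_conn_piece_aux hXc hA.1 hAX hAcl hu hv hcov hdisj ho₂ ho₁
      (union_comm o₁ o₂ ▸ hco) hAo₂ hP₁ (by rwa [inter_comm o₁ o₂] at hempty)

/-- A proper closed connected subset of a preconnected set `X` having nonempty relative
interior gives a decomposition of `X` into two proper closed connected subsets. -/
lemma meager_decomp {X A : Set Y} (hXc : IsPreconnected X)
    (hA : IsConnected A) (hAX : A ⊆ X) (hAcl : closure A ∩ X = A) (hAne : A ≠ X)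
    (hint : ∃ V : Set Y, IsOpen V ∧ (V ∩ X).Nonempty ∧ V ∩ X ⊆ A) :
    ∃ H K : Set Y, H ⊆ X ∧ K ⊆ X ∧ H ≠ X ∧ K ≠ X ∧
      closure H ∩ X = H ∧ closure K ∩ X = K ∧
      IsConnected H ∧ IsConnected K ∧ H ∪ K = X := by
  have hSne : (X \ A).Nonempty := by
    obtain ⟨y, hyX, hyA⟩ := exists_of_ssubset (hAX.ssubset_of_ne hAne)
    exact ⟨y, hyX, hyA⟩
  by_cases hp : IsPreconnected (X \ A)
  · refine ⟨A, closure (X \ A) ∩ X, hAX, inter_subset_right, hAne, ?_, hAcl, ?_, hA, ?_, ?_⟩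
    · -- K ≠ X
      obtain ⟨V, hV, ⟨z, hzV, hzX⟩, hVA⟩ := hint
      have hVS : V ∩ (X \ A) = ∅ := by
        apply eq_empty_iff_forall_notMem.mpr
        rintro w ⟨hwV, hwX, hwA⟩
        exact hwA (hVA ⟨hwV, hwX⟩)
      have hzK : z ∉ closure (X \ A) := by
        intro hz
        have h2 := hV.inter_closure (t := X \ A) ⟨hzV, hz⟩
        rw [hVS, closure_empty] at h2
        exact Set.notMem_empty z h2
      intro h
      exact hzK ((h.symm ▸ hzX : z ∈ closure (X \ A) ∩ X)).1
    · -- closure K ∩ X = K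
      apply subset_antisymm
      · intro y hy
        refine ⟨?_, hy.2⟩
        have h3 : closure (closure (X \ A) ∩ X) ⊆ closure (X \ A) :=
          (closure_mono inter_subset_left).trans (closure_closure (s := X \ A)).subset
        exact h3 hy.1
      · exact fun y hy => ⟨subset_closure hy, hy.2⟩
    · -- IsConnected K
      refine ⟨hSne.mono (fun y hy => ⟨subset_closure hy, hy.1⟩), ?_⟩
      exact hp.subset_closure (fun y hy => ⟨subset_closure hy, hy.1⟩) inter_subset_left
    · -- union
      apply subset_antisymm
      · exact union_subset hAX inter_subset_right
      · intro y hy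
        by_cases hyA : y ∈ A
        · exact Or.inl hyA
        · exact Or.inr ⟨subset_closure ⟨hy, hyA⟩, hy⟩
  · -- X \ A is disconnected
    rw [IsPreconnected] at hp
    push_neg at hp
    obtain ⟨u, v, hu, hv, hcov, hneu, hnev, hdisj⟩ := hp
    set P := X \ A ∩ u with hP
    set Q := X \ A ∩ v with hQ
    have hPQ : ∀ w, w ∈ P → w ∈ Q → False := fun w h1 h2 =>
      (eq_empty_iff_forall_notMem.mp hdisj w) ⟨h1.1, h1.2, h2.2⟩
    have key : ∀ u' v' : Set Y, IsOpen u' → IsOpen v' → X \ A ⊆ u' ∪ v' →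
        X \ A ∩ (u' ∩ v') = ∅ →
        closure (A ∪ (X \ A ∩ u')) ∩ X ⊆ A ∪ (X \ A ∩ u') := by
      intro u' v' hu' hv' hcov' hdisj' y hy
      have hy1 := hy.1
      rw [closure_union] at hy1
      rcases hy1 with h | h
      · have h' : y ∈ closure A ∩ X := ⟨h, hy.2⟩
        rw [hAcl] at h'
        exact Or.inl h'
      · by_cases hyA : y ∈ A
        · exact Or.inl hyA
        · have hyS : y ∈ X \ A := ⟨hy.2, hyA⟩
          rcases hcov' hyS with hyu | hyv
          · exact Or.inr ⟨hyS, hyu⟩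
          · exfalso
            have h2 := hv'.inter_closure (t := X \ A ∩ u') ⟨hyv, h⟩
            have hvP : v' ∩ (X \ A ∩ u') = ∅ := by
              apply eq_empty_iff_forall_notMem.mpr
              rintro w ⟨hwv, hwS, hwu⟩
              exact (eq_empty_iff_forall_notMem.mp hdisj' w) ⟨hwS, hwu, hwv⟩
            rw [hvP, closure_empty] at h2
            exact Set.notMem_empty y h2
    obtain ⟨p, hpP⟩ := hneu
    obtain ⟨q, hqQ⟩ := hnev
    have hcov2 : X \ A ⊆ v ∪ u := by rwa [union_comm]
    have hdisj2 : X \ A ∩ (v ∩ u) = ∅ := by rwa [inter_comm v u]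
    refine ⟨A ∪ P, A ∪ Q, ?_, ?_, ?_, ?_, ?_, ?_, ?_, ?_, ?_⟩
    · exact union_subset hAX (fun y hy => hy.1.1)
    · exact union_subset hAX (fun y hy => hy.1.1)
    · -- A ∪ P ≠ X
      intro h
      have hqX : q ∈ X := hqQ.1.1
      rcases (h.symm ▸ hqX : q ∈ A ∪ P) with h1 | h1
      · exact hqQ.1.2 h1
      · exact hPQ q h1 hqQ
    · intro h
      have hpX : p ∈ X := hpP.1.1
      rcases (h.symm ▸ hpX : p ∈ A ∪ Q) with h1 | h1
      · exact hpP.1.2 h1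
      · exact hPQ p hpP h1
    · exact subset_antisymm (key u v hu hv hcov hdisj)
        (fun y hy => ⟨subset_closure hy,
          (union_subset hAX (fun w hw => hw.1.1)) hy⟩)
    · exact subset_antisymm (key v u hv hu hcov2 hdisj2)
        (fun y hy => ⟨subset_closure hy,
          (union_subset hAX (fun w hw => hw.1.1)) hy⟩)
    · exact ⟨hA.1.mono subset_union_left,
        meager_conn_piece hXc hA hAX hAcl hu hv hcov hdisj⟩
    · exact ⟨hA.1.mono subset_union_left,
        meager_conn_piece hXc hA hAX hAcl hv hu hcov2 hdisj2⟩
    · -- union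
      apply subset_antisymm
      · exact union_subset (union_subset hAX (fun y hy => hy.1.1))
          (union_subset hAX (fun y hy => hy.1.1))
      · intro y hy
        by_cases hyA : y ∈ A
        · exact Or.inl (Or.inl hyA)
        · rcases hcov ⟨hy, hyA⟩ with h | h
          · exact Or.inl (Or.inr ⟨⟨hy, hyA⟩, h⟩)
          · exact Or.inr (Or.inr ⟨⟨hy, hyA⟩, h⟩)

end Aux

/-- An indecomposable noncompact meager composant is of the first category
in itself. -/
theorem stmt_5 {Y : Type*} [TopologicalSpace Y] [CompactSpace Y] [ConnectedSpace Y]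
    [TopologicalSpace.MetrizableSpace Y] [Nontrivial Y]
    (x : Y) (X : Set Y)
    (hX : X = ⋃₀ {K : Set Y | IsCompact K ∧ IsConnected K ∧ IsNowhereDense K ∧ x ∈ K})
    (hind : ¬ ∃ H K : Set Y, H ⊆ X ∧ K ⊆ X ∧ H ≠ X ∧ K ≠ X ∧
      closure H ∩ X = H ∧ closure K ∩ X = K ∧
      IsConnected H ∧ IsConnected K ∧ H ∪ K = X)
    (hnc : ¬ IsCompact X) :
    IsMeagre (Set.univ : Set X) := by
  letI : MetricSpace Y := TopologicalSpace.metrizableSpaceMetric Y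
  -- the singleton {x} is a nowhere dense subcontinuum
  have hndx : IsNowhereDense ({x} : Set Y) := by
    rw [IsNowhereDense, closure_singleton]
    rcases Set.subset_singleton_iff_eq.mp (interior_subset (s := ({x} : Set Y))) with h | h
    · exact h
    · exfalso
      have hopen : IsOpen ({x} : Set Y) := h ▸ isOpen_interior
      rcases isClopen_iff.mp ⟨isClosed_singleton, hopen⟩ with h' | h'
      · exact (Set.singleton_ne_empty x) h'
      · obtain ⟨y, hy⟩ := exists_ne x
        exact hy (by rw [← Set.mem_singleton_iff, h']; trivial)
  have hxmem : ({x} : Set Y) ∈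
      {K : Set Y | IsCompact K ∧ IsConnected K ∧ IsNowhereDense K ∧ x ∈ K} :=
    ⟨isCompact_singleton, isConnected_singleton, hndx, rfl⟩
  have hxX : x ∈ X := hX ▸ ⟨{x}, hxmem, rfl⟩
  have hKsub : ∀ K, (IsCompact K ∧ IsConnected K ∧ IsNowhereDense K ∧ x ∈ K) → K ⊆ X :=
    fun K hK => hX ▸ subset_sUnion_of_mem hK
  have hXconn : IsPreconnected X := by
    rw [hX]
    exact isPreconnected_sUnion x _ (fun K hK => hK.2.2.2) (fun K hK => hK.2.1.2)
  -- countable basis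
  obtain ⟨B, hBc, hBne, hBbasis⟩ := TopologicalSpace.exists_countable_basis Y
  set B' : Set (Set Y) := {U ∈ B | (U ∩ X).Nonempty} with hB'
  have hB'c : B'.Countable := hBc.mono (sep_subset _ _)
  -- the pieces
  set XU : Set Y → Set Y := fun U =>
    ⋃₀ {K | (IsCompact K ∧ IsConnected K ∧ IsNowhereDense K ∧ x ∈ K) ∧ K ∩ U = ∅}
    with hXU
  have hXUsub : ∀ U, XU U ⊆ X := fun U => by
    intro y hy
    obtain ⟨K, hK, hyK⟩ := hy
    exact hKsub K hK.1 hyK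
  have hXUU : ∀ U, XU U ∩ U = ∅ := fun U => by
    apply eq_empty_iff_forall_notMem.mpr
    rintro y ⟨⟨K, hK, hyK⟩, hyU⟩
    exact (eq_empty_iff_forall_notMem.mp hK.2 y) ⟨hyK, hyU⟩
  set F : Set Y → Set X := fun U => Subtype.val ⁻¹' (closure (XU U)) with hF
  have hFclosed : ∀ U, IsClosed (F U) := fun U =>
    isClosed_closure.preimage continuous_subtype_val
  -- each F U with U ∈ B' is nowhere dense in X
  have hFnd : ∀ U ∈ B', IsNowhereDense (F U) := by
    intro U hU
    rw [(hFclosed U).isNowhereDense_iff]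
    by_contra hne
    obtain ⟨z, hz⟩ := nonempty_iff_ne_empty.mpr hne
    obtain ⟨V, hVopen, hVeq⟩ := isOpen_induced_iff.mp (isOpen_interior (s := F U))
    have hzV : (z : Y) ∈ V := by rw [← Set.mem_preimage, hVeq]; exact hz
    set A : Set Y := closure (XU U) ∩ X with hA
    have hVA : V ∩ X ⊆ A := by
      rintro w ⟨hwV, hwX⟩
      have h1 : (⟨w, hwX⟩ : X) ∈ interior (F U) := by
        rw [← hVeq]; exact hwV
      have h2 : (⟨w, hwX⟩ : X) ∈ F U := interior_subset h1
      exact ⟨h2, hwX⟩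
    -- XU U is nonempty (so x ∈ XU U)
    have hXUne : x ∈ XU U := by
      have hzA : (z : Y) ∈ A := hVA ⟨hzV, z.2⟩
      rcases eq_empty_or_nonempty (XU U) with h | ⟨w, hw⟩
      · rw [hA, h, closure_empty] at hzA
        exact absurd hzA.1 (Set.notMem_empty _)
      · obtain ⟨K, hK, _⟩ := hw
        exact ⟨K, hK, hK.1.2.2.2⟩
    have hAconn : IsConnected A := by
      refine ⟨⟨x, subset_closure hXUne, hxX⟩, ?_⟩
      have h1 : IsPreconnected (XU U) :=
        isPreconnected_sUnion x _ (fun K hK => hK.1.2.2.2) (fun K hK => hK.1.2.1.2)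
      exact h1.subset_closure (fun y hy => ⟨subset_closure hy, hXUsub U hy⟩)
        inter_subset_left
    have hAcl : closure A ∩ X = A := by
      apply subset_antisymm
      · intro y hy
        refine ⟨?_, hy.2⟩
        have h3 : closure A ⊆ closure (XU U) :=
          (closure_mono inter_subset_left).trans (closure_closure (s := XU U)).subset
        exact h3 hy.1
      · exact fun y hy => ⟨subset_closure hy, hy.2⟩
    have hAneX : A ≠ X := by
      obtain ⟨hUB, w, hwU, hwX⟩ := hU
      have hUopen : IsOpen U := hBbasis.isOpen hUB
      have hUXU : U ∩ XU U = ∅ := by rw [inter_comm]; exact hXUU U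
      have hwA : w ∉ A := by
        rintro ⟨hwcl, -⟩
        have h4 := hUopen.inter_closure (t := XU U) ⟨hwU, hwcl⟩
        rw [hUXU, closure_empty] at h4
        exact Set.notMem_empty w h4
      intro h
      exact hwA (h.symm ▸ hwX)
    exact hind (meager_decomp hXconn hAconn inter_subset_right hAcl hAneX
      ⟨V, hVopen, ⟨z, hzV, z.2⟩, hVA⟩)
  -- the pieces cover X
  have hcover : (Set.univ : Set X) ⊆ ⋃₀ (F '' B') := by
    rintro ⟨yv, hyvX⟩ -
    have hyv : yv ∈ ⋃₀ {K : Set Y | IsCompact K ∧ IsConnected K ∧ IsNowhereDense K ∧ x ∈ K} := by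
      have h := hyvX; rw [hX] at h; exact h
    obtain ⟨K, hK, hyK⟩ := hyv
    have hKX : K ⊆ X := hKsub K hK
    have hKne : K ≠ X := fun h => hnc (h ▸ hK.1)
    obtain ⟨w, hwX, hwK⟩ := exists_of_ssubset (hKX.ssubset_of_ne hKne)
    have hKc : IsClosed K := hK.1.isClosed
    obtain ⟨U, hUB, hwU, hUK⟩ :=
      hBbasis.exists_subset_of_mem_open (show w ∈ Kᶜ from hwK) hKc.isOpen_compl
    have hUB' : U ∈ B' := ⟨hUB, ⟨w, hwU, hwX⟩⟩
    have hKU : K ∩ U = ∅ := by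
      apply eq_empty_iff_forall_notMem.mpr
      rintro t ⟨htK, htU⟩
      exact (hUK htU) htK
    refine ⟨F U, ⟨U, hUB', rfl⟩, ?_⟩
    exact subset_closure ⟨K, ⟨hK, hKU⟩, hyK⟩
  -- conclude
  rw [isMeagre_iff_countable_union_isNowhereDense]
  refine ⟨F '' B', ?_, hB'c.image F, hcover⟩
  rintro t ⟨U, hU, rfl⟩
  exact hFnd U hU
end

section
/- Let X be a meager composant of a continuum Y that is indecomposable and noncompact, and fix x ∈ X. If {U_n : n ∈ ℕ} is a countable basis of nonempty open sets for the subspace X \ {x}, then X equals the union over n of the connected components of x in X \ U_n. -/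
/-- For an indecomposable noncompact meager composant X and a countable basis
of nonempty open sets for X \ {x}, X is the union of the components of x in
the sets X \ Uₙ. -/
theorem stmt_6 {Y : Type*} [TopologicalSpace Y] [CompactSpace Y] [ConnectedSpace Y]
    [TopologicalSpace.MetrizableSpace Y] [Nontrivial Y]
    (x : Y) (X : Set Y) (hx : x ∈ X)
    (hX : X = ⋃₀ {K : Set Y | IsCompact K ∧ IsConnected K ∧ IsNowhereDense K ∧ x ∈ K})
    (hind : ¬ ∃ H K : Set Y, H ⊆ X ∧ K ⊆ X ∧ H ≠ X ∧ K ≠ X ∧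
      closure H ∩ X = H ∧ closure K ∩ X = K ∧
      IsConnected H ∧ IsConnected K ∧ H ∪ K = X)
    (hnc : ¬ IsCompact X)
    (U : ℕ → Set Y)
    (hUopen : ∀ n, ∃ V : Set Y, IsOpen V ∧ U n = V ∩ (X \ {x}))
    (hUne : ∀ n, (U n).Nonempty)
    (hbasis : ∀ V : Set Y, IsOpen V → ∀ p ∈ V ∩ (X \ {x}),
      ∃ n, p ∈ U n ∧ U n ⊆ V ∩ (X \ {x})) :
    X = ⋃ n, connectedComponentIn (X \ U n) x := by
  letI : MetricSpace Y := TopologicalSpace.metrizableSpaceMetric Y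
  apply Set.Subset.antisymm
  · intro p hp
    rw [hX] at hp
    obtain ⟨K, ⟨hKc, hKconn, hKnd, hxK⟩, hpK⟩ := hp
    have hKsub : K ⊆ X := by
      rw [hX]; exact fun y hy => ⟨K, ⟨hKc, hKconn, hKnd, hxK⟩, hy⟩
    obtain ⟨q, hqX, hqK⟩ : (X \ K).Nonempty := by
      rw [Set.diff_nonempty]
      intro hXK
      exact hnc (hKc.of_isClosed_subset (by
        simpa using (hKsub.antisymm hXK ▸ hKc.isClosed)) (hKsub.antisymm hXK ▸ le_rfl))
    have hqx : q ≠ x := fun h => hqK (h ▸ hxK)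
    obtain ⟨n, hqU, hUsub⟩ := hbasis Kᶜ hKc.isClosed.isOpen_compl q ⟨hqK, hqX, hqx⟩
    refine Set.mem_iUnion.2 ⟨n, ?_⟩
    have hsub : K ⊆ X \ U n := fun y hy => ⟨hKsub hy, fun hyU => (hUsub hyU).1 hy⟩
    exact hKconn.isPreconnected.subset_connectedComponentIn hxK hsub hpK
  · intro p hp
    obtain ⟨n, hn⟩ := Set.mem_iUnion.1 hp
    exact (connectedComponentIn_subset _ _ hn).1
end

section
/- Let X be a dense meager composant of a continuum Y such that X ∪ {y} is irreducible for every y ∈ Y \ X and Y \ X ≠ ∅. Then X ∪ {y} is indecomposable for every y ∈ Y. -/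
open Set Topology

/-- Union of two closed nowhere dense sets is nowhere dense. -/
lemma nwd_union {Y : Type*} [TopologicalSpace Y] {s t : Set Y}
    (hs : IsClosed s) (ht : IsClosed t) (hns : IsNowhereDense s) (hnt : IsNowhereDense t) :
    IsNowhereDense (s ∪ t) := by
  rw [IsNowhereDense, (hs.union ht).closure_eq, interior_eq_empty_iff_dense_compl,
    compl_union]
  rw [IsNowhereDense, hs.closure_eq, interior_eq_empty_iff_dense_compl] at hns
  rw [IsNowhereDense, ht.closure_eq, interior_eq_empty_iff_dense_compl] at hnt
  exact hns.inter_of_isOpen_left hnt hs.isOpen_compl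

/-- Existence of a nowhere dense subcontinuum of X through any two points of X. -/
lemma chain {Y : Type*} [TopologicalSpace Y] [T2Space Y] (x : Y) (X : Set Y)
    (hX : X = ⋃₀ {K : Set Y | IsCompact K ∧ IsConnected K ∧ IsNowhereDense K ∧ x ∈ K})
    {a c : Y} (ha : a ∈ X) (hc : c ∈ X) :
    ∃ L : Set Y, IsCompact L ∧ IsConnected L ∧ IsNowhereDense L ∧ L ⊆ X ∧ a ∈ L ∧ c ∈ L := by
  rw [hX] at ha hc
  obtain ⟨Na, ⟨hNa1, hNa2, hNa3, hNa4⟩, haNa⟩ := ha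
  obtain ⟨Nc, ⟨hNc1, hNc2, hNc3, hNc4⟩, hcNc⟩ := hc
  refine ⟨Na ∪ Nc, hNa1.union hNc1, IsConnected.union ⟨x, hNa4, hNc4⟩ hNa2 hNc2,
    nwd_union hNa1.isClosed hNc1.isClosed hNa3 hNc3, ?_, Or.inl haNa, Or.inr hcNc⟩
  rw [hX]
  exact subset_sUnion_of_mem ⟨hNa1.union hNc1, IsConnected.union ⟨x, hNa4, hNc4⟩ hNa2 hNc2,
    nwd_union hNa1.isClosed hNc1.isClosed hNa3 hNc3, Or.inl hNa4⟩

/-- The key lemma. -/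
lemma key {Y : Type*} [TopologicalSpace Y] [T2Space Y] (x : Y) (X : Set Y)
    (hX : X = ⋃₀ {K : Set Y | IsCompact K ∧ IsConnected K ∧ IsNowhereDense K ∧ x ∈ K})
    (hdense : Dense X) {y0 a : Y} (ha : a ∈ X)
    (P : ∀ C : Set Y, C ⊆ X ∪ {y0} → closure C ∩ (X ∪ {y0}) = C → IsConnected C →
          a ∈ C → y0 ∈ C → C = X ∪ {y0})
    {M : Set Y} (hM1 : M ⊆ X ∪ {y0}) (hM2 : closure M ∩ X ⊆ M)
    (hM3 : IsConnected M) (hM4 : y0 ∈ closure M) (hM5 : (M ∩ X).Nonempty)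
    (hMne : closure M ≠ univ) : False := by
  obtain ⟨c, hcM, hcX⟩ := hM5
  obtain ⟨L, hL1, hL2, hL3, hLX, haL, hcL⟩ := chain x X hX ha hcX
  have hLclosed : IsClosed L := hL1.isClosed
  set C := (M ∪ L) ∪ {y0} with hC
  have hMLconn : IsConnected (M ∪ L) := IsConnected.union ⟨c, hcM, hcL⟩ hM3 hL2
  have hCsub : C ⊆ X ∪ {y0} := by
    rintro z ((hz | hz) | hz)
    · exact hM1 hz
    · exact Or.inl (hLX hz)
    · exact Or.inr hz
  have hclC : closure C = closure M ∪ L := by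
    rw [hC, closure_union, closure_union, hLclosed.closure_eq, closure_singleton]
    apply Subset.antisymm
    · rintro z ((hz | hz) | rfl)
      exacts [Or.inl hz, Or.inr hz, Or.inl hM4]
    · rintro z (hz | hz)
      exacts [Or.inl (Or.inl hz), Or.inl (Or.inr hz)]
  have hCcl : closure C ∩ (X ∪ {y0}) = C := by
    apply Subset.antisymm
    · rw [hclC]
      rintro z ⟨hz1 | hz1, hz2⟩
      · rcases hz2 with hz2 | hz2
        · exact Or.inl (Or.inl (hM2 ⟨hz1, hz2⟩))
        · exact Or.inr hz2
      · exact Or.inl (Or.inr hz1)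
    · exact subset_inter subset_closure hCsub
  have hCconn : IsConnected C := by
    refine hMLconn.subset_closure subset_union_left ?_
    rintro z ((hz | hz) | hz)
    · exact subset_closure (Or.inl hz)
    · exact subset_closure (Or.inr hz)
    · rcases hz with rfl
      exact closure_mono subset_union_left hM4
  have hCeq : C = X ∪ {y0} :=
    P C hCsub hCcl hCconn (Or.inl (Or.inr haL)) (Or.inr rfl)
  have hclCuniv : closure C = univ := by
    apply eq_univ_of_univ_subset
    rw [hCeq]
    rw [← hdense.closure_eq]
    exact closure_mono subset_union_left
  -- now closure M ∪ L = univ, L closed nowhere dense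
  have hcompl : Lᶜ ⊆ closure M := by
    intro z hz
    have : z ∈ closure M ∪ L := by rw [← hclC, hclCuniv]; trivial
    rcases this with h | h
    · exact h
    · exact absurd h hz
  have hdenseLc : Dense Lᶜ := by
    rw [← interior_eq_empty_iff_dense_compl, ← hLclosed.closure_eq]
    exact hL3
  apply hMne
  apply eq_univ_of_univ_subset
  rw [← hdenseLc.closure_eq]
  calc closure Lᶜ ⊆ closure (closure M) := closure_mono hcompl
    _ = closure M := closure_closure

/-- Extract a point `a ∈ X` which together with `y0` witnesses irreducibility. -/
lemma getP {Y : Type*} [TopologicalSpace Y] [T2Space Y] [Nontrivial Y] (x : Y) (X : Set Y)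
    (hX : X = ⋃₀ {K : Set Y | IsCompact K ∧ IsConnected K ∧ IsNowhereDense K ∧ x ∈ K})
    (hdense : Dense X) (hxX : x ∈ X) {y0 : Y} (hy0 : y0 ∉ X)
    (h : ∃ a ∈ X ∪ {y0}, ∃ b ∈ X ∪ {y0},
        ∀ C : Set Y, C ⊆ X ∪ {y0} → closure C ∩ (X ∪ {y0}) = C → IsConnected C →
          a ∈ C → b ∈ C → C = X ∪ {y0}) :
    ∃ a ∈ X, ∀ C : Set Y, C ⊆ X ∪ {y0} → closure C ∩ (X ∪ {y0}) = C → IsConnected C →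
          a ∈ C → y0 ∈ C → C = X ∪ {y0} := by
  obtain ⟨a, ha, b, hb, P0⟩ := h
  have haX : a ∈ X ∨ a = y0 := by rcases ha with h | h; exacts [Or.inl h, Or.inr h]
  have hbX : b ∈ X ∨ b = y0 := by rcases hb with h | h; exacts [Or.inl h, Or.inr h]
  rcases haX with haX | haeq
  · rcases hbX with hbX | hbeq
    · -- both in X: contradiction
      exfalso
      obtain ⟨L, hL1, hL2, hL3, hLX, haL, hbL⟩ := chain x X hX haX hbX
      have hLcl : closure L ∩ (X ∪ {y0}) = L := by
        rw [hL1.isClosed.closure_eq]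
        exact Subset.antisymm inter_subset_left
          (subset_inter Subset.rfl (hLX.trans subset_union_left))
      have hLeq := P0 L (hLX.trans subset_union_left) hLcl hL2 haL hbL
      have : closure L = univ := by
        apply eq_univ_of_univ_subset
        rw [← hdense.closure_eq, hLeq]
        exact closure_mono subset_union_left
      rw [hL1.isClosed.closure_eq] at this
      have : interior (closure L) = ∅ := hL3
      rw [hL1.isClosed.closure_eq, ‹L = univ›, interior_univ] at this
      exact (univ_nonempty (α := Y)).ne_empty this
    · exact ⟨a, haX, fun C h1 h2 h3 h4 h5 => P0 C h1 h2 h3 h4 (by rw [hbeq]; exact h5)⟩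
  · rcases hbX with hbX | hbeq
    · exact ⟨b, hbX, fun C h1 h2 h3 h4 h5 => P0 C h1 h2 h3 (by rw [haeq]; exact h5) h4⟩
    · -- a = b = y0 : contradiction
      exfalso
      have hscl : closure ({y0} : Set Y) ∩ (X ∪ {y0}) = {y0} := by
        rw [closure_singleton]
        exact Subset.antisymm inter_subset_left
          (subset_inter Subset.rfl subset_union_right)
      have := P0 {y0} subset_union_right hscl isConnected_singleton
        (by rw [haeq]; rfl) (by rw [hbeq]; rfl)
      have hx' : x ∈ ({y0} : Set Y) := by rw [this]; exact Or.inl hxX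
      exact hy0 (by rwa [← hx'])

/-- If X ∪ {y} is irreducible for every y ∉ X (and Y \ X ≠ ∅), then X ∪ {y}
is indecomposable for every y ∈ Y. -/
theorem stmt_12 {Y : Type*} [TopologicalSpace Y] [CompactSpace Y] [ConnectedSpace Y]
    [TopologicalSpace.MetrizableSpace Y] [Nontrivial Y]
    (x : Y) (X : Set Y) (hdense : Dense X)
    (hX : X = ⋃₀ {K : Set Y | IsCompact K ∧ IsConnected K ∧ IsNowhereDense K ∧ x ∈ K})
    (hne : (Set.univ \ X).Nonempty)
    (hirr : ∀ y ∈ Set.univ \ X,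
      ∃ a ∈ X ∪ {y}, ∃ b ∈ X ∪ {y},
        ∀ C : Set Y, C ⊆ X ∪ {y} → closure C ∩ (X ∪ {y}) = C → IsConnected C →
          a ∈ C → b ∈ C → C = X ∪ {y}) :
    ∀ y : Y, ¬ ∃ H K : Set Y, H ⊆ X ∪ {y} ∧ K ⊆ X ∪ {y} ∧
      H ≠ X ∪ {y} ∧ K ≠ X ∪ {y} ∧
      closure H ∩ (X ∪ {y}) = H ∧ closure K ∩ (X ∪ {y}) = K ∧
      IsConnected H ∧ IsConnected K ∧ H ∪ K = X ∪ {y} := by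
  have hxX : x ∈ X := by
    rw [hX]
    refine ⟨{x}, ⟨isCompact_singleton, isConnected_singleton, ?_, rfl⟩, rfl⟩
    rw [IsNowhereDense, closure_singleton]
    by_contra h
    have hne' : (interior ({x} : Set Y)).Nonempty := nonempty_iff_ne_empty.mpr h
    obtain ⟨z, hz⟩ := hne'
    have hzx : z = x := mem_singleton_iff.mp (interior_subset hz)
    have hint : interior ({x} : Set Y) = {x} :=
      Subset.antisymm interior_subset (singleton_subset_iff.mpr (hzx ▸ hz))
    have hopen : IsOpen ({x} : Set Y) := hint ▸ isOpen_interior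
    rcases isClopen_iff.mp ⟨isClosed_singleton, hopen⟩ with h | h
    · exact (singleton_nonempty x).ne_empty h
    · obtain ⟨w, hw⟩ := exists_ne x
      exact hw (by have : w ∈ ({x} : Set Y) := h ▸ mem_univ w; exact this)
  rintro y ⟨H, K, hHs, hKs, hHne, hKne, hHcl, hKcl, hHc, hKc, hHK⟩
  by_cases hy : y ∈ X
  · -- here X ∪ {y} = X
    have hXy : X ∪ {y} = X := union_eq_self_of_subset_right (singleton_subset_iff.mpr hy)
    rw [hXy] at hHs hKs hHne hKne hHcl hKcl hHK
    obtain ⟨y0, -, hy0X⟩ := hne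
    obtain ⟨a, haX, P⟩ := getP x X hX hdense hxX hy0X (hirr y0 ⟨mem_univ _, hy0X⟩)
    have main : ∀ M : Set Y, M ⊆ X → M ≠ X → closure M ∩ X = M → IsConnected M →
        y0 ∈ closure M → False := by
      intro M hMs hMneq hMcl hMconn hMy0
      have hMX : (M ∩ X).Nonempty := by
        obtain ⟨z, hz⟩ := hMconn.nonempty
        exact ⟨z, hz, hMs hz⟩
      have hMne2 : closure M ≠ univ := by
        intro h
        exact hMneq (by rw [← hMcl, h, univ_inter])
      exact key x X hX hdense haX P (hMs.trans subset_union_left) hMcl.le hMconn hMy0 hMX hMne2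
    have hy0cl : y0 ∈ closure H ∪ closure K := by
      rw [← closure_union, hHK, hdense.closure_eq]
      trivial
    rcases hy0cl with h | h
    · exact main H hHs hHne hHcl hHc h
    · exact main K hKs hKne hKcl hKc h
  · -- y ∉ X
    obtain ⟨a, haX, P⟩ := getP x X hX hdense hxX hy (hirr y ⟨mem_univ _, hy⟩)
    have main : ∀ M N : Set Y, M ⊆ X ∪ {y} → M ≠ X ∪ {y} → N ≠ X ∪ {y} →
        closure M ∩ (X ∪ {y}) = M → closure N ∩ (X ∪ {y}) = N →
        IsConnected M → M ∪ N = X ∪ {y} → y ∈ M → False := by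
      intro M N hMs hMneq hNneq hMcl hNcl hMconn hMN hyM
      have hMX : (M ∩ X).Nonempty := by
        by_contra hempty
        rw [not_nonempty_iff_eq_empty] at hempty
        have hXN : X ⊆ N := by
          intro z hz
          have : z ∈ M ∪ N := by rw [hMN]; exact Or.inl hz
          rcases this with h | h
          · exact absurd (show z ∈ M ∩ X from ⟨h, hz⟩) (by rw [hempty]; exact notMem_empty z)
          · exact h
        apply hNneq
        rw [← hNcl]
        apply Subset.antisymm inter_subset_right
        apply subset_inter _ Subset.rfl
        have : closure N = univ := eq_univ_of_univ_subset
          (by rw [← hdense.closure_eq]; exact closure_mono hXN)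
        rw [this]; exact subset_univ _
      have hMne2 : closure M ≠ univ := by
        intro h
        exact hMneq (by rw [← hMcl, h, univ_inter])
      have hM2 : closure M ∩ X ⊆ M := by
        intro z hz
        rw [← hMcl]
        exact ⟨hz.1, Or.inl hz.2⟩
      exact key x X hX hdense haX P hMs hM2 hMconn (subset_closure hyM) hMX hMne2
    have hyHK : y ∈ H ∪ K := by rw [hHK]; exact Or.inr rfl
    rcases hyHK with h | h
    · exact main H K hHs hHne hKne hHcl hKcl hHc hHK h
    · exact main K H hKs hKne hHne hKcl hHcl hKc (by rw [union_comm]; exact hHK) h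
end

section
/- Every dense connected subset of an indecomposable continuum is indecomposable (as a connected space): if X is connected, dense in an indecomposable continuum Y, then X is not the union of two proper closed (in X) connected subsets. -/
/-- A dense connected subset of an indecomposable continuum is indecomposable
as a connected space. -/
theorem stmt_15 {Y : Type*} [TopologicalSpace Y] [CompactSpace Y] [ConnectedSpace Y]
    [TopologicalSpace.MetrizableSpace Y] [Nontrivial Y]
    (hY : ¬ ∃ H K : Set Y, IsCompact H ∧ IsCompact K ∧ IsConnected H ∧ IsConnected K ∧
      H ≠ Set.univ ∧ K ≠ Set.univ ∧ H ∪ K = Set.univ)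
    (X : Set Y) (hXconn : IsConnected X) (hXdense : Dense X) :
    ¬ ∃ H K : Set Y, H ⊆ X ∧ K ⊆ X ∧ H ≠ X ∧ K ≠ X ∧
      closure H ∩ X = H ∧ closure K ∩ X = K ∧
      IsConnected H ∧ IsConnected K ∧ H ∪ K = X := by
  rintro ⟨H, K, hHX, hKX, hHne, hKne, hHcl, hKcl, hHconn, hKconn, hHK⟩
  apply hY
  refine ⟨closure H, closure K, isClosed_closure.isCompact, isClosed_closure.isCompact,
    hHconn.closure, hKconn.closure, ?_, ?_, ?_⟩
  · intro h
    apply hHne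
    apply Set.Subset.antisymm hHX
    intro x hx
    have : x ∈ closure H ∩ X := ⟨h ▸ Set.mem_univ x, hx⟩
    rwa [hHcl] at this
  · intro h
    apply hKne
    apply Set.Subset.antisymm hKX
    intro x hx
    have : x ∈ closure K ∩ X := ⟨h ▸ Set.mem_univ x, hx⟩
    rwa [hKcl] at this
  · rw [← closure_union, hHK]
    exact hXdense.closure_eq
end

section
/- Let Y be a homogeneous continuum with filament additivity and dense filament composants. Then the non-singularity relation ¬sng, defined by ¬sng⟨x,y⟩ iff there exists a connected C ⊆ fcs(x) with x ∈ C, y ∈ closure(C), and closure(C) ≠ Y, is symmetric: ¬sng⟨x,y⟩ implies ¬sng⟨y,x⟩. -/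
variable {Y : Type*} [TopologicalSpace Y]

/-- A subcontinuum `K` is filament if it has an open neighborhood in which
the connected component of `K` is nowhere dense. -/
def IsFilament (K : Set Y) : Prop :=
  IsCompact K ∧ IsConnected K ∧
    ∃ U : Set Y, IsOpen U ∧ K ⊆ U ∧ ∀ k ∈ K, IsNowhereDense (connectedComponentIn U k)

/-- The filament composant of a point. -/
def fcs (x : Y) : Set Y := ⋃₀ {K : Set Y | IsFilament K ∧ x ∈ K}

/-!
By the Effros theorem, every point `c` of `C` close enough to `y` is carried to `y` by a
homeomorphism `g` moving no point by more than a prescribed `δ`. The union `D` of all these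
translates `g '' C` is connected (all of them contain `y`), its closure contains `x` (the
homeomorphisms can be taken arbitrarily small), and it misses a small ball around a point far
from `closure C`. Filament additivity makes `fcs` constant along filament composants, so
`g '' C ⊆ g '' fcs c ⊆ fcs (g c) = fcs y`.

The Effros theorem itself is proved in two steps. By homogeneity, separability of the space of
homeomorphisms and the Baire category theorem, the orbit of `y` under `ε`-small homeomorphisms is
dense near `y`. A back-and-forth approximation, as in the proof of the open mapping theorem, then
shows that the closure of the orbit under small enough homeomorphisms lies in the `ε`-orbit.
-/

open Set Metric Filter Topology

theorem exists_seq_of_forall_exists_succ {α : Type*} {p : ℕ → α → Prop}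
    {r : ℕ → α → α → Prop} {a : α} (h0 : p 0 a) (h : ∀ n x, p n x → ∃ y, p (n + 1) y ∧ r n x y) :
    ∃ f : ℕ → α, f 0 = a ∧ ∀ n, r n (f n) (f (n + 1)) := by
  choose! g hg using h
  let f : ℕ → α := fun n => Nat.rec a (fun n x => g n x) n
  have hf : ∀ n, p n (f n) := fun n => Nat.rec h0 (fun n ih => (hg n _ ih).1) n
  exact ⟨f, rfl, fun n => (hg n _ (hf n)).2⟩

namespace Effros

variable {X : Type*} [MetricSpace X]

def MovesAtMost (ε : ℝ) (h : X ≃ₜ X) : Prop := ∀ u, dist (h u) u ≤ ε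

lemma MovesAtMost.symm {ε : ℝ} {h : X ≃ₜ X} (hh : MovesAtMost ε h) : MovesAtMost ε h.symm :=
  fun u => by simpa [dist_comm] using hh (h.symm u)

lemma MovesAtMost.trans {ε δ : ℝ} {h g : X ≃ₜ X} (hh : MovesAtMost ε h) (hg : MovesAtMost δ g) :
    MovesAtMost (ε + δ) (h.trans g) := fun u =>
  calc dist (g (h u)) u ≤ dist (g (h u)) (h u) + dist (h u) u := dist_triangle _ _ _
    _ ≤ ε + δ := by linarith [hg (h u), hh u]

lemma MovesAtMost.mono {ε δ : ℝ} {h : X ≃ₜ X} (hh : MovesAtMost ε h) (hεδ : ε ≤ δ) :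
    MovesAtMost δ h := fun u => (hh u).trans hεδ

def smallOrbit (ε : ℝ) (y : X) : Set X := {z | ∃ h : X ≃ₜ X, MovesAtMost ε h ∧ h y = z}

lemma image_smallOrbit_subset {ε δ : ℝ} {f : X ≃ₜ X} (hf : MovesAtMost δ f) (y : X) :
    f '' smallOrbit ε y ⊆ smallOrbit (ε + δ) y := by
  rintro _ ⟨_, ⟨h, hh, rfl⟩, rfl⟩
  exact ⟨h.trans f, hh.trans hf, rfl⟩

def UniformlyClose (d e : ℝ) (P Q : X ≃ₜ X) : Prop :=
  (∀ z, dist (P z) (Q z) ≤ d) ∧ ∀ z, dist (P.symm z) (Q.symm z) ≤ e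

variable [CompactSpace X]

lemma exists_countable_dense_homeomorph :
    ∃ D : Set (X ≃ₜ X), D.Countable ∧
      ∀ (h : X ≃ₜ X) {ε : ℝ}, 0 < ε → ∃ g ∈ D, ∀ u, dist (h u) (g u) < ε := by
  obtain ⟨T, hTS, hTc, hST⟩ := (TopologicalSpace.IsSeparable.of_separableSpace
    (range fun h : X ≃ₜ X => (h : C(X, X)))).exists_countable_dense_subset
  refine ⟨(fun h : X ≃ₜ X => (h : C(X, X))) ⁻¹' T,
    hTc.preimage fun _ _ h => Homeomorph.ext (DFunLike.congr_fun h :), fun h ε hε => ?_⟩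
  obtain ⟨f, hfT, hf⟩ := Metric.mem_closure_iff.mp (hST (mem_range_self h)) ε hε
  obtain ⟨g, rfl⟩ := hTS hfT
  exact ⟨g, hfT, fun u => (ContinuousMap.dist_apply_le_dist u).trans_lt hf⟩

theorem exists_ball_subset_closure_smallOrbit (hhom : ∀ a b : X, ∃ h : X ≃ₜ X, h a = b) (y : X)
    {ε : ℝ} (hε : 0 < ε) : ∃ r > 0, ball y r ⊆ closure (smallOrbit ε y) := by
  have : Nonempty X := ⟨y⟩
  obtain ⟨D, hDc, hD⟩ := exists_countable_dense_homeomorph (X := X)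
  have : Countable D := hDc.to_subtype
  -- `h y = g⁻¹ (g (h y))`, and `g ∘ h` is small when `g ∈ D` approximates `h⁻¹`
  have hcover : ⋃ g : D, closure ((g : X ≃ₜ X).symm '' smallOrbit (ε / 2) y) = univ := by
    refine eq_univ_of_forall fun w => ?_
    obtain ⟨h, rfl⟩ := hhom y w
    obtain ⟨g, hgD, hg⟩ := hD h.symm (half_pos hε)
    refine mem_iUnion.mpr ⟨⟨g, hgD⟩, subset_closure ⟨g (h y), ⟨h.trans g, fun u => ?_, rfl⟩,
      g.symm_apply_apply _⟩⟩
    simpa [dist_comm] using (hg (h u)).le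
  obtain ⟨g, hg⟩ := nonempty_interior_of_iUnion_of_closed (fun _ => isClosed_closure) hcover
  rw [← Homeomorph.image_closure, ← Homeomorph.image_interior] at hg
  obtain ⟨v, hv⟩ := hg.of_image
  obtain ⟨_, hfv, f, hf, rfl⟩ := _root_.mem_closure_iff.mp (interior_subset hv) _ isOpen_interior hv
  have hsub : f.symm '' interior (closure (smallOrbit (ε / 2) y)) ⊆ closure (smallOrbit ε y) :=
    calc _ ⊆ f.symm '' closure (smallOrbit (ε / 2) y) := image_mono interior_subset
      _ = closure (f.symm '' smallOrbit (ε / 2) y) := f.symm.image_closure _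
      _ ⊆ closure (smallOrbit ε y) := closure_mono <| by
        simpa using image_smallOrbit_subset (ε := ε / 2) hf.symm y
  obtain ⟨r, hr, hball⟩ := isOpen_iff.mp (f.symm.isOpenMap _ isOpen_interior) y
    ⟨f y, hfv, f.symm_apply_apply y⟩
  exact ⟨r, hr, hball.trans hsub⟩

lemma exists_movesAtMost_near (hhom : ∀ a b : X, ∃ h : X ≃ₜ X, h a = b) {a b : X} {β β' δ : ℝ}
    (hb : b ∈ closure (smallOrbit β a)) (hβ' : 0 < β') (hδ : 0 < δ) :
    ∃ g : X ≃ₜ X, MovesAtMost β g ∧ dist (g a) b < δ ∧ g a ∈ closure (smallOrbit β' b) := by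
  obtain ⟨r, hr, hball⟩ := exists_ball_subset_closure_smallOrbit hhom b hβ'
  obtain ⟨_, ⟨g, hg, rfl⟩, hgb⟩ := Metric.mem_closure_iff.mp hb (min r δ) (lt_min hr hδ)
  rw [dist_comm] at hgb
  exact ⟨g, hg, hgb.trans_le (min_le_right _ _),
    hball (mem_ball.mpr (hgb.trans_le (min_le_left _ _)))⟩

structure ChaseState (X : Type*) [TopologicalSpace X] where
  P : X ≃ₜ X
  Q : X ≃ₜ X
  β : ℝ

/-- Invariant of the back-and-forth construction: `P` moves `y` and `Q` moves `w` until they meet.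
Keeping `β` below the modulus of continuity of `P⁻¹` ensures that composing `P` with a `β`-small
homeomorphism changes `P⁻¹` by at most `2⁻ⁿ`, so the inverses converge too. -/
def Chase (c : ℝ) (y w : X) (n : ℕ) (s : ChaseState X) : Prop :=
  0 < s.β ∧ s.β ≤ c * (1 / 2) ^ n ∧
    (∀ ⦃u v⦄, dist u v ≤ s.β → dist (s.P.symm u) (s.P.symm v) ≤ (1 / 2) ^ n) ∧
    s.Q w ∈ closure (smallOrbit s.β (s.P y))

lemma exists_modulus (f : X ≃ₜ X) {t : ℝ} (ht : 0 < t) :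
    ∃ η > 0, ∀ ⦃u v⦄, dist u v ≤ η → dist (f u) (f v) ≤ t :=
  uniformContinuous_iff_le.mp (CompactSpace.uniformContinuous_of_continuous f.continuous) t ht

lemma Chase.exists_succ (hhom : ∀ a b : X, ∃ h : X ≃ₜ X, h a = b) {c : ℝ} {y w : X} {n : ℕ}
    {s : ChaseState X} (hs : Chase c y w n s) :
    ∃ t : ChaseState X, Chase c y w (n + 1) t ∧
      UniformlyClose (c * (1 / 2) ^ n) ((1 / 2) ^ n) s.P t.P ∧
      UniformlyClose (c * (1 / 2) ^ n) ((1 / 2) ^ n) s.Q t.Q ∧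
      dist (t.P y) (t.Q w) ≤ (1 / 2) ^ n := by
  obtain ⟨hβ, hβc, hPmod, hmem⟩ := hs
  have hc : 0 < c := (mul_pos_iff_of_pos_right (by positivity)).mp (hβ.trans_le hβc)
  obtain ⟨η, hη, hQmod⟩ := exists_modulus s.Q.symm (by positivity : (0 : ℝ) < (1 / 2) ^ n)
  -- move `P y` next to `Q w`, then `Q w` next to the new `P y`
  obtain ⟨g, hg, -, hgmem⟩ := exists_movesAtMost_near hhom hmem
    (lt_min (by positivity : 0 < c * (1 / 2) ^ n) hη) one_pos
  obtain ⟨η', hη', hP'mod⟩ :=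
    exists_modulus (s.P.trans g).symm (by positivity : (0 : ℝ) < (1 / 2) ^ (n + 1))
  obtain ⟨k, hk, hkd, hkmem⟩ := exists_movesAtMost_near hhom hgmem
    (lt_min (by positivity : 0 < c * (1 / 2) ^ (n + 1)) hη') (by positivity : (0 : ℝ) < (1 / 2) ^ n)
  refine ⟨⟨s.P.trans g, s.Q.trans k, min (c * (1 / 2) ^ (n + 1)) η'⟩,
    ⟨lt_min (by positivity) hη', min_le_left _ _,
      fun u v huv => hP'mod (huv.trans (min_le_right _ _)), hkmem⟩,
    ⟨fun z => ?_, fun z => ?_⟩, ⟨fun z => ?_, fun z => ?_⟩, ?_⟩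
  · exact (dist_comm _ _).trans_le ((hg _).trans hβc)
  · exact hPmod ((dist_comm _ _).trans_le (hg.symm z))
  · exact (dist_comm _ _).trans_le ((hk _).trans (min_le_left _ _))
  · exact hQmod ((dist_comm _ _).trans_le ((hk.symm z).trans (min_le_right _ _)))
  · exact (dist_comm _ _).trans_le hkd.le

theorem exists_tendsto_homeomorph [Nonempty X] {A : ℕ → X ≃ₜ X} {d e : ℕ → ℝ} (hd : Summable d)
    (he : Summable e) (hA : ∀ n, UniformlyClose (d n) (e n) (A n) (A (n + 1))) :
    ∃ H : X ≃ₜ X, ∀ z,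
      Tendsto (fun n => A n z) atTop (𝓝 (H z)) ∧ dist (A 0 z) (H z) ≤ ∑' n, d n := by
  have hlim : ∀ {B : ℕ → X ≃ₜ X} {b : ℕ → ℝ}, Summable b →
      (∀ n z, dist (B n z) (B (n + 1) z) ≤ b n) →
      ∃ F : C(X, X), Tendsto (fun n => (B n : C(X, X))) atTop (𝓝 F) := fun hb hB =>
    cauchySeq_tendsto_of_complete <| cauchySeq_of_dist_le_of_summable _
      (fun n => ContinuousMap.dist_le_iff_of_nonempty.mpr (hB n)) hb
  obtain ⟨F, hF⟩ := hlim hd fun n => (hA n).1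
  obtain ⟨G, hG⟩ := hlim he fun n => (hA n).2
  have hcomp : ∀ {f g : ℕ → C(X, X)} {F G : C(X, X)}, Tendsto f atTop (𝓝 F) →
      Tendsto g atTop (𝓝 G) → (∀ n, (g n).comp (f n) = .id X) → G.comp F = .id X :=
    fun hf hg hgf => tendsto_nhds_unique
      ((ContinuousMap.continuous_comp'.tendsto _).comp (hf.prodMk_nhds hg))
      (by simp only [Function.comp_def, hgf, tendsto_const_nhds])
  have hGF := hcomp hF hG fun n => (A n).symm_comp_toContinuousMap
  have hFG := hcomp hG hF fun n => (A n).toContinuousMap_comp_symm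
  let H : X ≃ₜ X :=
    { toFun := F, invFun := G, left_inv := fun z => DFunLike.congr_fun hGF z,
      right_inv := fun z => DFunLike.congr_fun hFG z }
  have hpt : ∀ z, Tendsto (fun n => A n z) atTop (𝓝 (H z)) := fun z =>
    ((continuous_eval_const z).tendsto F).comp hF
  exact ⟨H, fun z =>
    ⟨hpt z, dist_le_tsum_of_dist_le_of_tendsto₀ d (fun n => (hA n).1 z) hd (hpt z)⟩⟩

theorem exists_closure_smallOrbit_subset (hhom : ∀ a b : X, ∃ h : X ≃ₜ X, h a = b) (y : X)
    {ε : ℝ} (hε : 0 < ε) : ∃ β > 0, closure (smallOrbit β y) ⊆ smallOrbit ε y := by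
  refine ⟨min (ε / 4) 1, by positivity, fun w hw => ?_⟩
  have : Nonempty X := ⟨y⟩
  have h0 : Chase (ε / 4) y w 0 ⟨.refl X, .refl X, min (ε / 4) 1⟩ :=
    ⟨by positivity, by simp, fun u v huv => by simpa using huv.trans (min_le_right _ _),
      by simpa using hw⟩
  obtain ⟨s, hs0, hs⟩ := exists_seq_of_forall_exists_succ h0 fun n s h => h.exists_succ hhom
  have hgeom : Summable fun n : ℕ => ((1 : ℝ) / 2) ^ n := summable_geometric_two
  have hsum : ∑' n : ℕ, ε / 4 * (1 / 2) ^ n = ε / 2 := by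
    rw [tsum_mul_left, tsum_geometric_two]; ring
  obtain ⟨P, hP⟩ := exists_tendsto_homeomorph (hgeom.mul_left _) hgeom fun n => (hs n).1
  obtain ⟨Q, hQ⟩ := exists_tendsto_homeomorph (hgeom.mul_left _) hgeom fun n => (hs n).2.1
  have hPQ : P y = Q w := dist_le_zero.mp <| le_of_tendsto_of_tendsto'
    (((hP y).1.dist (hQ w).1).comp (tendsto_add_atTop_nat 1))
    (tendsto_pow_atTop_nhds_zero_of_lt_one (by norm_num) (by norm_num)) fun n => (hs n).2.2
  have hPm : MovesAtMost (ε / 2) P := fun z => by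
    simpa [hs0, dist_comm] using (hP z).2.trans hsum.le
  have hQm : MovesAtMost (ε / 2) Q := fun z => by
    simpa [hs0, dist_comm] using (hQ z).2.trans hsum.le
  exact ⟨P.trans Q.symm, by simpa using hPm.trans hQm.symm, by simp [hPQ]⟩

/-- The Effros theorem for homogeneous compact metric spaces. -/
theorem exists_movesAtMost_apply_eq (hhom : ∀ a b : X, ∃ h : X ≃ₜ X, h a = b) (y : X) {ε : ℝ}
    (hε : 0 < ε) : ∃ r > 0, ∀ c, dist c y < r → ∃ h : X ≃ₜ X, MovesAtMost ε h ∧ h c = y := by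
  obtain ⟨β, hβ, hsub⟩ := exists_closure_smallOrbit_subset hhom y hε
  obtain ⟨r, hr, hball⟩ := exists_ball_subset_closure_smallOrbit hhom y hβ
  refine ⟨r, hr, fun c hc => ?_⟩
  obtain ⟨h, hh, rfl⟩ := hsub (hball hc)
  exact ⟨h.symm, hh.symm, h.symm_apply_apply y⟩

theorem exists_isConnected_translates (hhom : ∀ a b : X, ∃ h : X ≃ₜ X, h a = b) {C : Set X}
    {y : X} (hC : IsPreconnected C) (hy : y ∈ closure C) (hCne : closure C ≠ univ) :
    ∃ D : Set X, IsConnected D ∧ y ∈ D ∧ C ⊆ closure D ∧ closure D ≠ univ ∧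
      ∀ d ∈ D, ∃ g : X ≃ₜ X, y ∈ g '' C ∧ d ∈ g '' C := by
  obtain ⟨p, hp⟩ := (ne_univ_iff_exists_notMem _).mp hCne
  obtain ⟨δ, hδ, hδp⟩ := isClosed_closure.isCompact.exists_cthickening_subset_open
    isOpen_compl_singleton (subset_compl_singleton_iff.mpr hp)
  let G := {g : X ≃ₜ X | MovesAtMost δ g ∧ y ∈ g '' C}
  have hGmem : ∀ ε > 0, ∃ g ∈ G, MovesAtMost ε g := fun ε hε => by
    obtain ⟨r, hr, hg⟩ := exists_movesAtMost_apply_eq hhom y (lt_min hδ hε)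
    obtain ⟨c, hc, hcy⟩ := Metric.mem_closure_iff.mp hy r hr
    obtain ⟨g, hg, hgc⟩ := hg c (by rwa [dist_comm])
    exact ⟨g, ⟨hg.mono (min_le_left _ _), c, hc, hgc⟩, hg.mono (min_le_right _ _)⟩
  have hDδ : (⋃ g ∈ G, g '' C) ⊆ cthickening δ C := by
    simp only [iUnion_subset_iff]
    rintro g hg _ ⟨c, hc, rfl⟩
    exact mem_cthickening_of_dist_le _ c δ C hc (hg.1 c)
  obtain ⟨g₀, hg₀, -⟩ := hGmem 1 one_pos
  refine ⟨⋃ g ∈ G, g '' C, ⟨⟨y, mem_biUnion hg₀ hg₀.2⟩, ?_⟩, mem_biUnion hg₀ hg₀.2, ?_, ?_, ?_⟩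
  · rw [← sUnion_image]
    refine isPreconnected_sUnion y _ ?_ ?_ <;> rintro _ ⟨g, hg, rfl⟩
    exacts [hg.2, hC.image _ g.continuous.continuousOn]
  · refine fun z hz => Metric.mem_closure_iff.mpr fun ε hε => ?_
    obtain ⟨g, hg, hgε⟩ := hGmem (ε / 2) (half_pos hε)
    exact ⟨g z, mem_biUnion hg (mem_image_of_mem g hz),
      (dist_comm _ _).trans_lt ((hgε z).trans_lt (half_lt_self hε))⟩
  · refine (ne_univ_iff_exists_notMem _).mpr ⟨p, fun hpD => ?_⟩
    exact hδp ((isClosed_cthickening.closure_subset_iff.mpr hDδ).trans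
      cthickening_closure.symm.subset hpD) (mem_singleton p)
  · intro d hd
    obtain ⟨g, hg, hd⟩ := mem_iUnion₂.mp hd
    exact ⟨g, hg.2, hd⟩

end Effros

lemma IsFilament.image {Z : Type*} [TopologicalSpace Z] {K : Set Y} (hK : IsFilament K)
    (h : Y ≃ₜ Z) : IsFilament (h '' K) := by
  obtain ⟨hc, hconn, U, hU, hKU, hnd⟩ := hK
  refine ⟨hc.image h.continuous, hconn.image _ h.continuous.continuousOn, h '' U,
    h.isOpen_image.mpr hU, image_mono hKU, ?_⟩
  rintro _ ⟨k, hk, rfl⟩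
  rw [IsNowhereDense, ← h.image_connectedComponentIn (hKU hk), ← h.image_closure,
    ← h.image_interior, hnd k hk, image_empty]

lemma image_fcs_subset {Z : Type*} [TopologicalSpace Z] (h : Y ≃ₜ Z) (x : Y) :
    h '' fcs x ⊆ fcs (h x) := by
  rintro _ ⟨z, ⟨K, ⟨hK, hxK⟩, hzK⟩, rfl⟩
  exact ⟨h '' K, ⟨hK.image h, mem_image_of_mem h hxK⟩, mem_image_of_mem h hzK⟩

lemma fcs_subset_fcs_of_mem
    (hadd : ∀ K L : Set Y, IsFilament K → IsFilament L → (K ∩ L).Nonempty → IsFilament (K ∪ L))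
    {x z : Y} (hz : z ∈ fcs x) : fcs x ⊆ fcs z := by
  obtain ⟨L, ⟨hL, hxL⟩, hzL⟩ := hz
  rintro a ⟨K, ⟨hK, hxK⟩, haK⟩
  exact ⟨K ∪ L, ⟨hadd K L hK hL ⟨x, hxK, hxL⟩, Or.inr hzL⟩, Or.inl haK⟩

theorem stmt_16_general {Y : Type*} [TopologicalSpace Y] [CompactSpace Y]
    [TopologicalSpace.MetrizableSpace Y]
    (hhom : ∀ a b : Y, ∃ h : Y ≃ₜ Y, h a = b)
    (hadd : ∀ K L : Set Y, IsFilament K → IsFilament L → (K ∩ L).Nonempty →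
      IsFilament (K ∪ L))
    (x y : Y)
    (h : ∃ C : Set Y, C ⊆ fcs x ∧ IsConnected C ∧ x ∈ C ∧ y ∈ closure C ∧
      closure C ≠ Set.univ) :
    ∃ C : Set Y, C ⊆ fcs y ∧ IsConnected C ∧ y ∈ C ∧ x ∈ closure C ∧
      closure C ≠ Set.univ := by
  let _ : MetricSpace Y := TopologicalSpace.metrizableSpaceMetric Y
  obtain ⟨C, hCx, hC, hxC, hyC, hCne⟩ := h
  obtain ⟨D, hD, hyD, hCD, hDne, hDC⟩ :=
    Effros.exists_isConnected_translates hhom hC.isPreconnected hyC hCne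
  refine ⟨D, fun d hd => ?_, hD, hyD, hCD hxC, hDne⟩
  obtain ⟨g, ⟨c, hc, rfl⟩, ⟨c', hc', rfl⟩⟩ := hDC d hd
  exact image_fcs_subset g c ⟨c', fcs_subset_fcs_of_mem hadd (hCx hc) (hCx hc'), rfl⟩

/-- Symmetry of the non-singularity relation in a filament additive
homogeneous continuum with dense filament composants. -/
theorem stmt_16 {Y : Type*} [TopologicalSpace Y] [CompactSpace Y] [ConnectedSpace Y]
    [TopologicalSpace.MetrizableSpace Y] [Nontrivial Y]
    (hhom : ∀ a b : Y, ∃ h : Y ≃ₜ Y, h a = b)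
    (hadd : ∀ K L : Set Y, IsFilament K → IsFilament L → (K ∩ L).Nonempty →
      IsFilament (K ∪ L))
    (hdense : ∀ x : Y, Dense (fcs x))
    (x y : Y)
    (h : ∃ C : Set Y, C ⊆ fcs x ∧ IsConnected C ∧ x ∈ C ∧ y ∈ closure C ∧
      closure C ≠ Set.univ) :
    ∃ C : Set Y, C ⊆ fcs y ∧ IsConnected C ∧ y ∈ C ∧ x ∈ closure C ∧
      closure C ≠ Set.univ :=
  stmt_16_general hhom hadd x y h
end

section
/- Let Y be a homogeneous continuum that is filament additive with dense filament composants. If x' ∈ fcs(x), then sng(x) = sng(x'), where sng(x) is the set of all y ∈ Y such that every connected C ⊆ fcs(x) containing x with y in the closure of C satisfies closure(C) = Y. -/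
variable {Y : Type*} [TopologicalSpace Y]

/-- The set of filament singularities of `x`. -/
def sng (x : Y) : Set Y :=
  {y : Y | ∀ C : Set Y, C ⊆ fcs x → IsConnected C → x ∈ C → y ∈ closure C →
    closure C = Set.univ}

lemma sng_subset_aux {Y : Type*} [TopologicalSpace Y] [T2Space Y]
    (hadd : ∀ K L : Set Y, IsFilament K → IsFilament L → (K ∩ L).Nonempty →
      IsFilament (K ∪ L))
    (x x' : Y) (K : Set Y) (hK : IsFilament K) (hxK : x ∈ K) (hx'K : x' ∈ K) :
    sng x ⊆ sng x' := by
  obtain ⟨hKc, hKconn, U, hU, hKU, hnd⟩ := hK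
  -- K is nowhere dense and closed
  have hKnd : IsNowhereDense K := by
    have h1 : K ⊆ connectedComponentIn U x :=
      hKconn.isPreconnected.subset_connectedComponentIn hxK hKU
    have h2 := hnd x hxK
    rw [IsNowhereDense] at h2 ⊢
    have h3 : closure K ⊆ closure (connectedComponentIn U x) := closure_mono h1
    have := interior_mono h3
    rw [h2] at this
    exact Set.subset_empty_iff.mp this
  have hKclosed : IsClosed K := hKc.isClosed
  have hKcomp : Dense Kᶜ := by
    have : interior K = ∅ := by
      have := hKnd
      rwa [IsNowhereDense, hKclosed.closure_eq] at this
    rwa [← interior_eq_empty_iff_dense_compl]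
  -- fcs x' ⊆ fcs x
  have hfcs : fcs x' ⊆ fcs x := by
    intro z hz
    obtain ⟨L, ⟨hL, hx'L⟩, hzL⟩ := hz
    have hLK : IsFilament (L ∪ K) :=
      hadd L K hL ⟨hKc, hKconn, U, hU, hKU, hnd⟩ ⟨x', hx'L, hx'K⟩
    exact ⟨L ∪ K, ⟨hLK, Or.inr hxK⟩, Or.inl hzL⟩
  have hKfcsx : K ⊆ fcs x :=
    Set.subset_sUnion_of_mem ⟨⟨hKc, hKconn, U, hU, hKU, hnd⟩, hxK⟩
  intro y hy C hC hCconn hx'C hyC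
  set D := C ∪ K with hD
  have hDconn : IsConnected D :=
    hCconn.union ⟨x', hx'C, hx'K⟩ hKconn
  have hDfcs : D ⊆ fcs x := Set.union_subset (hC.trans hfcs) hKfcsx
  have hDclos : closure D = Set.univ :=
    hy D hDfcs hDconn (Or.inr hxK) (closure_mono Set.subset_union_left hyC)
  -- closure D = closure C ∪ K
  have hDdecomp : closure D = closure C ∪ K := by
    rw [hD, closure_union, hKclosed.closure_eq]
  have hsub : Kᶜ ⊆ closure C := by
    intro z hz
    have : z ∈ closure C ∪ K := by rw [← hDdecomp, hDclos]; trivial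
    exact this.resolve_right hz
  have : Set.univ ⊆ closure C := by
    have := closure_mono hsub
    rwa [hKcomp.closure_eq, isClosed_closure.closure_eq] at this
  exact Set.eq_univ_of_univ_subset this

/-- Points of the same filament composant have the same singularities. -/
theorem stmt_17 {Y : Type*} [TopologicalSpace Y] [CompactSpace Y] [ConnectedSpace Y]
    [TopologicalSpace.MetrizableSpace Y] [Nontrivial Y]
    (hhom : ∀ a b : Y, ∃ h : Y ≃ₜ Y, h a = b)
    (hadd : ∀ K L : Set Y, IsFilament K → IsFilament L → (K ∩ L).Nonempty →
      IsFilament (K ∪ L))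
    (hdense : ∀ x : Y, Dense (fcs x))
    (x x' : Y) (hx' : x' ∈ fcs x) :
    sng x = sng x' := by
  letI : MetricSpace Y := TopologicalSpace.metrizableSpaceMetric Y
  obtain ⟨K, ⟨hK, hxK⟩, hx'K⟩ := hx'
  exact Set.Subset.antisymm
    (sng_subset_aux hadd x x' K hK hxK hx'K)
    (sng_subset_aux hadd x' x K hK hx'K hxK)
end
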